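/- arXiv:2204.06062 — 8 statements merged into one kernel-verified Lean document; each statement's English description precedes it below -/
import Mathlib

section
/- A nonempty polyhedral set P in ℝ^n (an intersection of finitely many closed half-spaces) is pointed (i.e., its lineality space, defined as char.cone(P) ∩ −char.cone(P), is {0}) if and only if P has a face of dimension 0 (a vertex). -/
open scoped RealInnerProductSpace
open Set

noncomputable section

abbrev E (n : ℕ) := EuclideanSpace ℝ (Fin n)

/-- A polyhedral set: an intersection of finitely many closed half-spaces. -/
def IsPolyhedral {n : ℕ} (P : Set (E n)) : Prop :=
  ∃ (m : ℕ) (w : Fin m → E n) (b : Fin m → ℝ),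
    P = {x | ∀ i, ⟪w i, x⟫ + b i ≤ 0}

/-- The characteristic (recession) cone of `P`. -/
def charCone {n : ℕ} (P : Set (E n)) : Set (E n) := {y | ∀ x ∈ P, x + y ∈ P}

/-- The lineality space of `P`: `charCone P ∩ (−charCone P)`. -/
def linealitySpace {n : ℕ} (P : Set (E n)) : Set (E n) :=
  charCone P ∩ {y | -y ∈ charCone P}

/-- `P` is pointed if its lineality space is trivial. -/
def IsPointed {n : ℕ} (P : Set (E n)) : Prop := linealitySpace P = {0}

/-- `(w, b)` determines a supporting hyperplane of `P`. -/
def IsSupporting {n : ℕ} (w : E n) (b : ℝ) (P : Set (E n)) : Prop :=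
  w ≠ 0 ∧ (∀ x ∈ P, ⟪w, x⟫ + b ≤ 0) ∧ ∃ x ∈ P, ⟪w, x⟫ + b = 0

/-- A face of a polyhedral set: `∅`, `P` itself, or the intersection of `P` with a
supporting hyperplane. -/
def IsFace {n : ℕ} (P F : Set (E n)) : Prop :=
  F = ∅ ∨ F = P ∨ ∃ w b, IsSupporting w b P ∧ F = {x ∈ P | ⟪w, x⟫ + b = 0}

/-- A vertex (0-dimensional face) of `P`. -/
def IsVertex {n : ℕ} (P : Set (E n)) (v : E n) : Prop := IsFace P {v}

/-- `K_P`: the convex hull of the vertices of `P`. -/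
def Kpart {n : ℕ} (P : Set (E n)) : Set (E n) := convexHull ℝ {v | IsVertex P v}

/-- The set of admissible distances from `K_P` to `p` along unit directions of the
characteristic cone. -/
def deltaSet {n : ℕ} (P : Set (E n)) (p : E n) : Set ℝ :=
  {t : ℝ | 0 ≤ t ∧ ∃ x ∈ Kpart P, ∃ y ∈ charCone P, ‖y‖ = 1 ∧ p = x + t • y}

/-- `δ_P(p)`: the minimal distance from `K_P` to `p` along directions in the
characteristic cone. -/
def delta {n : ℕ} (P : Set (E n)) (p : E n) : ℝ := sInf (deltaSet P p)

lemma mem_orth_span {n : ℕ} {s : Set (E n)} {y : E n}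
    (h : ∀ v ∈ s, ⟪v, y⟫ = 0) : y ∈ (Submodule.span ℝ s)ᗮ := by
  rw [Submodule.mem_orthogonal]
  intro u hu
  induction hu using Submodule.span_induction with
  | mem v hv => exact h v hv
  | zero => simp
  | add a c _ _ ha hc => rw [inner_add_left, ha, hc, add_zero]
  | smul r a _ ha => rw [real_inner_smul_left, ha, mul_zero]

lemma exists_tight_top {n m : ℕ} (w : Fin m → E n) (b : Fin m → ℝ)
    (hspan : Submodule.span ℝ (Set.range w) = ⊤) :
    ∀ (k : ℕ) (x : E n), (∀ i, ⟪w i, x⟫ + b i ≤ 0) →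
      n ≤ Module.finrank ℝ (Submodule.span ℝ (w '' {i | ⟪w i, x⟫ + b i = 0})) + k →
      ∃ v, (∀ i, ⟪w i, v⟫ + b i ≤ 0) ∧
        Submodule.span ℝ (w '' {i | ⟪w i, v⟫ + b i = 0}) = ⊤ := by
  intro k
  induction k with
  | zero =>
    intro x hx hrank
    refine ⟨x, hx, Submodule.eq_top_of_finrank_eq ?_⟩
    have h1 := Submodule.finrank_le (Submodule.span ℝ (w '' {i | ⟪w i, x⟫ + b i = 0}))
    rw [finrank_euclideanSpace_fin] at h1 ⊢
    omega
  | succ k ih =>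
    intro x hx hrank
    by_cases htop : Submodule.span ℝ (w '' {i | ⟪w i, x⟫ + b i = 0}) = ⊤
    · exact ⟨x, hx, htop⟩
    set S := Submodule.span ℝ (w '' {i | ⟪w i, x⟫ + b i = 0}) with hS
    have horth : Sᗮ ≠ ⊥ := fun hb => htop (Submodule.orthogonal_eq_bot_iff.mp hb)
    obtain ⟨y, hy, hy0⟩ := Submodule.ne_bot_iff _ |>.mp horth
    have hyS : ∀ i, (⟪w i, x⟫ + b i = 0) → ⟪w i, y⟫ = 0 := fun i hi =>
      (Submodule.mem_orthogonal S y).mp hy (w i) (Submodule.subset_span ⟨i, hi, rfl⟩)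
    have hj : ∃ j, ⟪w j, y⟫ ≠ 0 := by
      by_contra h
      push_neg at h
      have hmem : y ∈ (Submodule.span ℝ (Set.range w))ᗮ :=
        mem_orth_span (by rintro v ⟨j, rfl⟩; exact h j)
      rw [hspan, Submodule.top_orthogonal_eq_bot, Submodule.mem_bot] at hmem
      exact hy0 hmem
    obtain ⟨j, hjne⟩ := hj
    set y' : E n := if 0 < ⟪w j, y⟫ then y else -y with hy'def
    have hy'pos : 0 < ⟪w j, y'⟫ := by
      rcases hjne.lt_or_gt with h | h
      · rw [hy'def, if_neg (not_lt.mpr h.le), inner_neg_right]; linarith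
      · rw [hy'def, if_pos h]; exact h
    have hy'orth : ∀ i, (⟪w i, x⟫ + b i = 0) → ⟪w i, y'⟫ = 0 := by
      intro i hi
      rw [hy'def]
      split_ifs
      · exact hyS i hi
      · rw [inner_neg_right, hyS i hi, neg_zero]
    classical
    set J : Finset (Fin m) := Finset.univ.filter (fun i => 0 < ⟪w i, y'⟫) with hJ
    have hJne : J.Nonempty := ⟨j, Finset.mem_filter.mpr ⟨Finset.mem_univ j, hy'pos⟩⟩
    obtain ⟨j₀, hj₀J, hj₀min⟩ :=
      J.exists_min_image (fun i => (-(⟪w i, x⟫ + b i)) / ⟪w i, y'⟫) hJne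
    have hd₀ : 0 < ⟪w j₀, y'⟫ := by
      have := Finset.mem_filter.mp hj₀J
      exact this.2
    set t : ℝ := (-(⟪w j₀, x⟫ + b j₀)) / ⟪w j₀, y'⟫ with ht_def
    have ht : 0 ≤ t := div_nonneg (by linarith [hx j₀]) hd₀.le
    set x' := x + t • y' with hx'def
    have hx'i : ∀ i, ⟪w i, x'⟫ + b i = (⟪w i, x⟫ + b i) + t * ⟪w i, y'⟫ := by
      intro i
      rw [hx'def, inner_add_right, real_inner_smul_right]
      ring
    have hx'P : ∀ i, ⟪w i, x'⟫ + b i ≤ 0 := by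
      intro i
      rw [hx'i]
      rcases le_or_gt ⟪w i, y'⟫ 0 with h | h
      · nlinarith [hx i]
      · have hiJ : i ∈ J := Finset.mem_filter.mpr ⟨Finset.mem_univ i, h⟩
        have hmin := hj₀min i hiJ
        have : t * ⟪w i, y'⟫ ≤ -(⟪w i, x⟫ + b i) := by
          rw [← le_div_iff₀ h]
          exact hmin
        linarith
    have hj₀tight : ⟪w j₀, x'⟫ + b j₀ = 0 := by
      rw [hx'i, ht_def, div_mul_cancel₀ _ hd₀.ne']
      ring
    have hsub : S ≤ Submodule.span ℝ (w '' {i | ⟪w i, x'⟫ + b i = 0}) := by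
      apply Submodule.span_mono
      apply Set.image_mono
      intro i hi
      rw [mem_setOf_eq] at hi ⊢
      rw [hx'i, hi, hy'orth i hi]
      ring
    have hnotmem : w j₀ ∉ S := by
      intro hmem
      have h0 := (Submodule.mem_orthogonal S y).mp hy (w j₀) hmem
      rw [hy'def] at hd₀
      split_ifs at hd₀
      · exact hd₀.ne' h0
      · rw [inner_neg_right, h0, neg_zero] at hd₀; exact lt_irrefl 0 hd₀
    have hmem' : w j₀ ∈ Submodule.span ℝ (w '' {i | ⟪w i, x'⟫ + b i = 0}) :=
      Submodule.subset_span ⟨j₀, hj₀tight, rfl⟩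
    have hlt : S < Submodule.span ℝ (w '' {i | ⟪w i, x'⟫ + b i = 0}) :=
      lt_of_le_of_ne hsub (fun h => hnotmem (h ▸ hmem'))
    have hfr := Submodule.finrank_lt_finrank_of_lt hlt
    exact ih x' hx'P (by omega)

lemma charCone_eq {n m : ℕ} (w : Fin m → E n) (b : Fin m → ℝ)
    (hne : {x : E n | ∀ i, ⟪w i, x⟫ + b i ≤ 0}.Nonempty) :
    charCone {x : E n | ∀ i, ⟪w i, x⟫ + b i ≤ 0} = {y | ∀ i, ⟪w i, y⟫ ≤ 0} := by
  ext y
  constructor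
  · intro hy i
    obtain ⟨x₀, hx₀⟩ := hne
    have hk : ∀ k : ℕ, x₀ + (k : ℝ) • y ∈ {x : E n | ∀ i, ⟪w i, x⟫ + b i ≤ 0} := by
      intro k
      induction k with
      | zero => simpa using hx₀
      | succ k ihk =>
        have h2 := hy _ ihk
        have : x₀ + ((k : ℝ) + 1) • y = x₀ + (k : ℝ) • y + y := by
          rw [add_smul, one_smul]; abel
        rw [Nat.cast_succ, this]
        exact h2
    by_contra hpos
    rw [not_le] at hpos
    obtain ⟨k, hk'⟩ := exists_nat_gt ((-(⟪w i, x₀⟫ + b i)) / ⟪w i, y⟫)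
    have h1 := hk k i
    rw [inner_add_right, real_inner_smul_right] at h1
    rw [div_lt_iff₀ hpos] at hk'
    linarith
  · intro hy x hx i
    have h1 := hx i
    rw [inner_add_right]
    linarith [hy i]

/-- A nonempty polyhedral set in ℝⁿ is pointed iff it has a face of dimension 0 (a vertex). -/
theorem pointed_iff_exists_vertex {n : ℕ} (Pset : Set (E n))
    (hP : IsPolyhedral Pset) (hne : Pset.Nonempty) :
    IsPointed Pset ↔ ∃ v, IsVertex Pset v := by
  classical
  obtain ⟨m, w, b, hPeq⟩ := hP
  have hneP : {x : E n | ∀ i, ⟪w i, x⟫ + b i ≤ 0}.Nonempty := hPeq ▸ hne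
  have hcc : charCone Pset = {y | ∀ i, ⟪w i, y⟫ ≤ 0} := by
    rw [hPeq]; exact charCone_eq w b hneP
  constructor
  · intro hpt
    -- pointedness implies the normals span everything
    have hspan : Submodule.span ℝ (Set.range w) = ⊤ := by
      by_contra h
      have hob : (Submodule.span ℝ (Set.range w))ᗮ ≠ ⊥ :=
        fun hb => h (Submodule.orthogonal_eq_bot_iff.mp hb)
      obtain ⟨y, hy, hy0⟩ := Submodule.ne_bot_iff _ |>.mp hob
      have hyw : ∀ i, ⟪w i, y⟫ = 0 := fun i =>
        (Submodule.mem_orthogonal _ y).mp hy (w i) (Submodule.subset_span ⟨i, rfl⟩)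
      have hylin : y ∈ linealitySpace Pset := by
        constructor
        · rw [hcc]; intro i; rw [hyw i]
        · rw [mem_setOf_eq, hcc]; intro i; rw [inner_neg_right, hyw i, neg_zero]
      rw [IsPointed] at hpt
      rw [hpt, mem_singleton_iff] at hylin
      exact hy0 hylin
    obtain ⟨x₀, hx₀⟩ := hne
    rw [hPeq] at hx₀
    obtain ⟨v, hvP, hvtop⟩ := exists_tight_top w b hspan n x₀ hx₀ (Nat.le_add_left n _)
    have hvPset : v ∈ Pset := by rw [hPeq]; exact hvP
    set T : Finset (Fin m) := Finset.univ.filter (fun i => ⟪w i, v⟫ + b i = 0) with hT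
    set W : E n := ∑ i ∈ T, w i with hW
    set B : ℝ := ∑ i ∈ T, b i with hB
    have hWx : ∀ x : E n, ⟪W, x⟫ + B = ∑ i ∈ T, (⟪w i, x⟫ + b i) := by
      intro x
      rw [hW, hB, sum_inner, Finset.sum_add_distrib]
    have hWv : ⟪W, v⟫ + B = 0 := by
      rw [hWx]
      exact Finset.sum_eq_zero (fun i hi => (Finset.mem_filter.mp hi).2)
    have hface : {x ∈ Pset | ⟪W, x⟫ + B = 0} = {v} := by
      ext x
      simp only [mem_setOf_eq, mem_singleton_iff]
      constructor
      · rintro ⟨hxP, hxeq⟩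
        rw [hPeq] at hxP
        have hterms : ∀ i ∈ T, ⟪w i, x⟫ + b i = 0 := by
          have hsum : ∑ i ∈ T, (⟪w i, x⟫ + b i) = 0 := by rw [← hWx]; exact hxeq
          exact (Finset.sum_eq_zero_iff_of_nonpos (fun i _ => hxP i)).mp hsum
        have hdiff : x - v ∈ (Submodule.span ℝ (w '' {i | ⟪w i, v⟫ + b i = 0}))ᗮ := by
          apply mem_orth_span
          rintro u ⟨i, hi, rfl⟩
          rw [mem_setOf_eq] at hi
          have h1 : ⟪w i, x⟫ + b i = 0 :=
            hterms i (Finset.mem_filter.mpr ⟨Finset.mem_univ i, hi⟩)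
          rw [inner_sub_right]
          rw [show (⟪w i, x⟫ : ℝ) = -b i by linarith, show (⟪w i, v⟫ : ℝ) = -b i by linarith]
          ring
        rw [hvtop, Submodule.top_orthogonal_eq_bot, Submodule.mem_bot, sub_eq_zero] at hdiff
        exact hdiff
      · rintro rfl
        exact ⟨hvPset, hWv⟩
    by_cases hW0 : W = 0
    · have hB0 : B = 0 := by
        have := hWv
        rw [hW0, inner_zero_left, zero_add] at this
        exact this
      have hPv : Pset = {v} := by
        rw [← hface]
        ext x
        simp [hW0, hB0, inner_zero_left]
      exact ⟨v, Or.inr (Or.inl hPv.symm)⟩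
    · refine ⟨v, Or.inr (Or.inr ⟨W, B, ⟨hW0, ?_, v, hvPset, hWv⟩, hface.symm⟩)⟩
      intro x hx
      rw [hPeq] at hx
      rw [hWx]
      exact Finset.sum_nonpos (fun i _ => hx i)
  · rintro ⟨v, hv⟩
    have hvP : v ∈ Pset := by
      rcases hv with h | h | ⟨w', b', _, heq⟩
      · exact absurd h (singleton_ne_empty v)
      · rw [← h]; rfl
      · have : v ∈ {x ∈ Pset | ⟪w', x⟫ + b' = 0} := by rw [← heq]; rfl
        exact this.1
    have hzero : (0 : E n) ∈ linealitySpace Pset := by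
      constructor
      · intro x hx; simpa using hx
      · intro x hx; simpa using hx
    rw [IsPointed]
    ext y
    simp only [mem_singleton_iff]
    constructor
    · rintro ⟨hy1, hy2⟩
      rw [mem_setOf_eq] at hy2
      have h1 : v + y ∈ Pset := hy1 v hvP
      have h2 : v + -y ∈ Pset := hy2 v hvP
      rcases hv with h | h | ⟨w', b', ⟨hw0, hle, -⟩, heq⟩
      · exact absurd h (singleton_ne_empty v)
      · -- Pset = {v}
        rw [← h, mem_singleton_iff] at h1
        have := h1
        rwa [add_eq_left] at this
      · have hv0 : ⟪w', v⟫ + b' = 0 := by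
          have : v ∈ {x ∈ Pset | ⟪w', x⟫ + b' = 0} := by rw [← heq]; rfl
          exact this.2
        have e1 := hle _ h1
        have e2 := hle _ h2
        rw [inner_add_right] at e1 e2
        rw [inner_neg_right] at e2
        have hy0 : ⟪w', y⟫ = 0 := by linarith
        have hmem : v + y ∈ ({v} : Set (E n)) := by
          rw [heq]
          exact ⟨h1, by rw [inner_add_right, hy0]; linarith⟩
        rw [mem_singleton_iff, add_eq_left] at hmem
        exact hmem
    · rintro rfl
      exact hzero
end
end

section
/- Let P ⊆ ℝ^n be a pointed polyhedral set and F a face of P. Then the base map of P maps F into F; that is, for every p ∈ F, the unique point base_P(p) ∈ K_P realizing the minimal distance δ_P(p) from K_P to p along a direction in char.cone(P) lies in F. -/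
open scoped RealInnerProductSpace
open Set

noncomputable section

lemma polyhedral_convex {n : ℕ} {P : Set (E n)} (hP : IsPolyhedral P) : Convex ℝ P := by
  obtain ⟨m, w, b, rfl⟩ := hP
  intro x hx y hy a c ha hc hac i
  have h1 := hx i
  have h2 := hy i
  have : ⟪w i, a • x + c • y⟫ = a * ⟪w i, x⟫ + c * ⟪w i, y⟫ := by
    rw [inner_add_right, real_inner_smul_right, real_inner_smul_right]
  rw [this]
  have hb : a * b i + c * b i = b i := by rw [← add_mul, hac, one_mul]
  have t1 := mul_nonpos_of_nonneg_of_nonpos ha h1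
  have t2 := mul_nonpos_of_nonneg_of_nonpos hc h2
  rw [mul_add] at t1 t2
  linarith

lemma Kpart_subset {n : ℕ} {P : Set (E n)} (hP : IsPolyhedral P) : Kpart P ⊆ P := by
  apply convexHull_min _ (polyhedral_convex hP)
  intro v hv
  rcases hv with h | h | ⟨w, b, _, h⟩
  · exact absurd h (Set.singleton_ne_empty v)
  · rw [← h]; rfl
  · have : v ∈ {x ∈ P | ⟪w, x⟫ + b = 0} := by rw [← h]; rfl
    exact this.1

lemma cone_inner_nonpos {n : ℕ} {P : Set (E n)} {y w p : E n} {b : ℝ}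
    (hy : y ∈ charCone P) (hp : p ∈ P) (hsupp : ∀ x ∈ P, ⟪w, x⟫ + b ≤ 0) :
    ⟪w, y⟫ ≤ 0 := by
  by_contra h
  push_neg at h
  have hk : ∀ k : ℕ, p + (k : ℝ) • y ∈ P := by
    intro k
    induction k with
    | zero => simpa using hp
    | succ k ih =>
      have h2 := hy _ ih
      have : p + ((k : ℝ) + 1) • y = p + (k : ℝ) • y + y := by
        rw [add_smul, one_smul]; abel
      rw [Nat.cast_succ, this]; exact h2
  obtain ⟨k, hk'⟩ := exists_nat_gt ((-(⟪w, p⟫ + b)) / ⟪w, y⟫)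
  have h1 := hsupp _ (hk k)
  rw [inner_add_right, real_inner_smul_right] at h1
  have h3 := (div_lt_iff₀ h).mp hk'
  linarith

lemma delta_nonneg {n : ℕ} (P : Set (E n)) (p : E n) : 0 ≤ delta P p :=
  Real.sInf_nonneg fun _ ht => ht.1

/-- The base map of a pointed polyhedral set maps each face into itself. -/
theorem base_mem_face {n : ℕ} (Pset Fc : Set (E n))
    (hP : IsPolyhedral Pset) (hptd : IsPointed Pset) (hF : IsFace Pset Fc)
    (p : E n) (hp : p ∈ Fc) :
    ∀ x ∈ Kpart Pset,
      (∃ y ∈ charCone Pset, ‖y‖ = 1 ∧ p = x + delta Pset p • y) → x ∈ Fc := by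
  rintro x hx ⟨y, hy, hny, hpeq⟩
  rcases hF with h | h | ⟨w, b, ⟨hw0, hsupp, hex⟩, h⟩
  · exact absurd hp (by simp [h])
  · rw [h]; exact Kpart_subset hP hx
  · subst h
    have hxP : x ∈ Pset := Kpart_subset hP hx
    have hpP : p ∈ Pset := hp.1
    have hpe : ⟪w, p⟫ + b = 0 := hp.2
    have hwy : ⟪w, y⟫ ≤ 0 := cone_inner_nonpos hy hpP hsupp
    have hδ : 0 ≤ delta Pset p := delta_nonneg Pset p
    have hxle : ⟪w, x⟫ + b ≤ 0 := hsupp _ hxP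
    have hcalc : ⟪w, p⟫ = ⟪w, x⟫ + delta Pset p * ⟪w, y⟫ := by
      conv_lhs => rw [hpeq]
      rw [inner_add_right, real_inner_smul_right]
    refine ⟨hxP, ?_⟩
    nlinarith
end
end

section
/- Let P be a polyhedral set in ℝ^n and F a proper (nonempty) face of P. Then the normal span of F equals the normal span of P, where the normal span of a polyhedral set Q is the linear span of all vectors v normal to some hyperplane H with H ∩ Q = ∅. -/
open scoped RealInnerProductSpace
open Set

noncomputable section

/-- The normal span of a polyhedral set: the span of all normal vectors of
hyperplanes disjoint from it. -/
def nSpan {n : ℕ} (Q : Set (E n)) : Submodule ℝ (E n) :=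
  Submodule.span ℝ {v : E n | v ≠ 0 ∧ ∃ b : ℝ, ∀ x ∈ Q, ⟪v, x⟫ + b ≠ 0}


lemma inner_lin {n : ℕ} (u : E n) : IsLinearMap ℝ (fun x : E n => ⟪u, x⟫) :=
  ⟨fun x y => inner_add_right u x y, fun c x => real_inner_smul_right u x c⟩

/-- Key Farkas-type lemma (span version): a functional bounded above on a nonempty
"polyhedron" lies in the span of the constraint normals. -/
lemma farkas_span {n : ℕ} {ι : Type} (a : ι → E n) (c : ι → ℝ) (v : E n) (b : ℝ)
    (x₀ : E n) (hx₀ : ∀ i, ⟪a i, x₀⟫ + c i ≤ 0)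
    (hb : ∀ x : E n, (∀ i, ⟪a i, x⟫ + c i ≤ 0) → ⟪v, x⟫ + b ≤ 0) :
    v ∈ Submodule.span ℝ (Set.range a) := by
  set S := Submodule.span ℝ (Set.range a) with hS
  obtain ⟨p, hp, u, hu, rfl⟩ := S.exists_add_mem_mem_orthogonal v
  have hau : ∀ i, ⟪a i, u⟫ = 0 := fun i =>
    (Submodule.mem_orthogonal S u).1 hu (a i) (Submodule.subset_span ⟨i, rfl⟩)
  have hu0 : u = 0 := by
    by_contra h0
    have hnu : (0:ℝ) < ‖u‖^2 := pow_pos (norm_pos_iff.mpr h0) 2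
    set t : ℝ := (|⟪p + u, x₀⟫ + b| + 1) / ‖u‖^2 with ht
    have hmem : ∀ i, ⟪a i, x₀ + t • u⟫ + c i ≤ 0 := by
      intro i
      rw [inner_add_right, real_inner_smul_right, hau i]
      simpa using hx₀ i
    have := hb (x₀ + t • u) hmem
    have hpu : ⟪p + u, u⟫ = ‖u‖^2 := by
      rw [inner_add_left, (Submodule.mem_orthogonal S u).1 hu p hp,
        real_inner_self_eq_norm_sq]
      ring
    rw [inner_add_right, real_inner_smul_right, hpu, ht,
      div_mul_cancel₀ _ (ne_of_gt hnu)] at this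
    have habs : ⟪p + u, x₀⟫ + b + (|⟪p + u, x₀⟫ + b| + 1) ≥ 1 := by
      have := abs_nonneg (⟪p + u, x₀⟫ + b)
      have := neg_abs_le (⟪p + u, x₀⟫ + b)
      linarith
    linarith
  rw [hu0, add_zero]
  exact hp

/-- Sign constancy of a nonvanishing affine functional on a convex set. -/
lemma sign_const {n : ℕ} {F : Set (E n)} (hconv : Convex ℝ F) (v : E n) (b : ℝ)
    (h : ∀ x ∈ F, ⟪v, x⟫ + b ≠ 0) :
    (∀ x ∈ F, ⟪v, x⟫ + b ≤ 0) ∨ (∀ x ∈ F, ⟪-v, x⟫ + (-b) ≤ 0) := by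
  by_contra hc
  push_neg at hc
  obtain ⟨⟨x₁, hx₁, h1⟩, ⟨x₂, hx₂, h2⟩⟩ := hc
  rw [inner_neg_left] at h2
  set α : ℝ := ⟪v, x₂⟫ + b with hα
  set β : ℝ := ⟪v, x₁⟫ + b with hβ
  have hαneg : α < 0 := by linarith
  have hβpos : 0 < β := by linarith
  set t : ℝ := (-α) / (β - α) with ht
  have ht0 : 0 ≤ t := div_nonneg (by linarith) (by linarith)
  have ht1 : t ≤ 1 := by
    rw [ht, div_le_one (by linarith)]
    linarith
  have hmem : (1 - t) • x₂ + t • x₁ ∈ F := hconv hx₂ hx₁ (by linarith) ht0 (by ring)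
  have hval : ⟪v, (1 - t) • x₂ + t • x₁⟫ + b = 0 := by
    rw [inner_add_right, real_inner_smul_right, real_inner_smul_right]
    have : t * (β - α) = -α := div_mul_cancel₀ (-α) (ne_of_gt (by linarith : (0:ℝ) < β - α))
    nlinarith [this]
  exact h _ hmem hval

/-- Any vector bounded above (as an affine functional) on `Q` is in `nSpan Q`. -/
lemma mem_nSpan_of_bdd {n : ℕ} {Q : Set (E n)} {v : E n} {b : ℝ}
    (h : ∀ x ∈ Q, ⟪v, x⟫ + b ≤ 0) : v ∈ nSpan Q := by
  by_cases h0 : v = 0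
  · simp [h0]
  · exact Submodule.subset_span ⟨h0, b - 1, fun x hx => by
      have := h x hx; intro hc; linarith⟩

/-- A proper nonempty face of a polyhedral set has the same normal span as the set. -/
theorem nSpan_face_eq {n : ℕ} (Pset Fc : Set (E n))
    (hP : IsPolyhedral Pset) (hF : IsFace Pset Fc) (hne : Fc.Nonempty)
    (hproper : Fc ≠ Pset) :
    nSpan Fc = nSpan Pset := by
  obtain ⟨m, W, B, hPeq⟩ := hP
  rcases hF with rfl | rfl | ⟨w, b₀, ⟨hw0, hwP, hwx⟩, hFeq⟩
  · exact absurd hne (by simp)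
  · exact absurd rfl hproper
  have hFP : Fc ⊆ Pset := by rw [hFeq]; exact fun x hx => hx.1
  set a : Option (Fin m) → E n := fun i => i.elim (-w) W with ha
  set c : Option (Fin m) → ℝ := fun i => i.elim (-b₀) B with hc
  have hFpoly : ∀ x : E n, x ∈ Fc ↔ ∀ i, ⟪a i, x⟫ + c i ≤ 0 := by
    intro x
    rw [hFeq]
    constructor
    · rintro ⟨hxP, hx0⟩ i
      cases i with
      | none => simp only [ha, hc, Option.elim, inner_neg_left]; linarith
      | some i => exact (hPeq ▸ hxP) i
    · intro hall
      have hxP : x ∈ Pset := hPeq ▸ (fun i => hall (some i))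
      have h1 := hall none
      simp only [ha, hc, Option.elim, inner_neg_left] at h1
      exact ⟨hxP, le_antisymm (hwP x hxP) (by linarith)⟩
  have hspan_le : Submodule.span ℝ (Set.range a) ≤ nSpan Pset := by
    rw [Submodule.span_le]
    rintro _ ⟨i, rfl⟩
    cases i with
    | none =>
      have : w ∈ nSpan Pset := mem_nSpan_of_bdd hwP
      simpa [ha] using Submodule.neg_mem _ this
    | some i =>
      exact mem_nSpan_of_bdd (fun x hx => (hPeq ▸ hx) i)
  have hconvF : Convex ℝ Fc := by
    have : Fc = ⋂ i, {x : E n | ⟪a i, x⟫ ≤ -(c i)} := by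
      ext x
      simp only [Set.mem_iInter, Set.mem_setOf_eq, hFpoly x]
      constructor <;> intro h i <;> linarith [h i]
    rw [this]
    exact convex_iInter fun i => convex_halfSpace_le (inner_lin _) _
  obtain ⟨x₀, hx₀⟩ := hne
  apply le_antisymm
  · rw [nSpan, Submodule.span_le]
    rintro v ⟨hv0, b, hb⟩
    have hsc := sign_const hconvF v b hb
    rcases hsc with hle | hle
    · exact hspan_le (farkas_span a c v b x₀ ((hFpoly x₀).1 hx₀)
        (fun x hx => hle x ((hFpoly x).2 hx)))
    · have : -v ∈ Submodule.span ℝ (Set.range a) :=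
        farkas_span a c (-v) (-b) x₀ ((hFpoly x₀).1 hx₀)
          (fun x hx => hle x ((hFpoly x).2 hx))
      have := hspan_le this
      simpa using Submodule.neg_mem _ this
  · rw [nSpan, Submodule.span_le]
    rintro v ⟨hv0, b, hb⟩
    exact Submodule.subset_span ⟨hv0, b, fun x hx => hb x (hFP hx)⟩
end
end

section
/- Let P be a full-dimensional (n-dimensional) polyhedral set in ℝ^n. Then P is pointed if and only if its normal span has dimension n, where the normal span is the linear span of all vectors normal to hyperplanes disjoint from P. -/
open scoped RealInnerProductSpace
open Set

noncomputable section

lemma charCone_mem_iff {n m : ℕ} (w : Fin m → E n) (b : Fin m → ℝ)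
    (Pset : Set (E n)) (hPeq : Pset = {x | ∀ i, ⟪w i, x⟫ + b i ≤ 0})
    (x₀ : E n) (hx₀ : x₀ ∈ Pset) (y : E n) :
    y ∈ charCone Pset ↔ ∀ i, ⟪w i, y⟫ ≤ 0 := by
  constructor
  · intro hy i
    have hk : ∀ k : ℕ, x₀ + (k : ℝ) • y ∈ Pset := by
      intro k
      induction k with
      | zero => simpa using hx₀
      | succ k ih =>
        have h2 := hy _ ih
        have : x₀ + ((k : ℝ) + 1) • y = x₀ + (k : ℝ) • y + y := by module
        rw [Nat.cast_succ, this]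
        exact h2
    by_contra h
    push_neg at h
    obtain ⟨k, hk'⟩ := exists_nat_gt ((-(⟪w i, x₀⟫ + b i)) / ⟪w i, y⟫)
    have hki := hk k
    rw [hPeq] at hki
    have h3 := hki i
    rw [inner_add_right, real_inner_smul_right] at h3
    have h4 := (div_lt_iff₀ h).mp hk'
    nlinarith
  · intro h x hx
    rw [hPeq] at hx ⊢
    intro i
    have h1 := hx i
    have h2 := h i
    rw [inner_add_right]
    linarith

/-- A full-dimensional polyhedral set in ℝⁿ is pointed iff its normal span has
dimension n. -/
theorem pointed_iff_rank_eq {n : ℕ} (Pset : Set (E n))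
    (hP : IsPolyhedral Pset) (hfull : (interior Pset).Nonempty) :
    IsPointed Pset ↔ Module.finrank ℝ (nSpan Pset) = n := by
  obtain ⟨m, w, b, hPeq⟩ := hP
  obtain ⟨x₀, hx₀i⟩ := hfull
  have hx₀ : x₀ ∈ Pset := interior_subset hx₀i
  set W : Submodule ℝ (E n) := Submodule.span ℝ (Set.range w) with hWdef
  have hwW : ∀ i, w i ∈ W := fun i => Submodule.subset_span ⟨i, rfl⟩
  -- lineality space equals the orthogonal complement of W
  have hlin : linealitySpace Pset = (Wᗮ : Set (E n)) := by
    ext y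
    simp only [linealitySpace, Set.mem_inter_iff, Set.mem_setOf_eq, SetLike.mem_coe]
    rw [charCone_mem_iff w b Pset hPeq x₀ hx₀, charCone_mem_iff w b Pset hPeq x₀ hx₀]
    constructor
    · rintro ⟨h1, h2⟩
      have h0 : ∀ i, ⟪w i, y⟫ = 0 := by
        intro i
        have := h2 i
        rw [inner_neg_right] at this
        linarith [h1 i]
      rw [Submodule.mem_orthogonal]
      intro u hu
      induction hu using Submodule.span_induction with
      | mem u hu => obtain ⟨i, rfl⟩ := hu; exact h0 i
      | zero => simp
      | add u v _ _ hu hv => rw [inner_add_left, hu, hv]; ring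
      | smul c u _ hu => rw [real_inner_smul_left, hu]; ring
    · intro hy
      have h0 : ∀ i, ⟪w i, y⟫ = 0 := fun i =>
        (Submodule.mem_orthogonal W y).mp hy (w i) (hwW i)
      constructor
      · intro i; rw [h0 i]
      · intro i; rw [inner_neg_right, h0 i]; simp
  -- points of the form x₀ + t • y with y ⊥ W stay in Pset
  have hline : ∀ y ∈ Wᗮ, ∀ t : ℝ, x₀ + t • y ∈ Pset := by
    intro y hy t
    rw [hPeq]
    intro i
    have h0 : ⟪w i, y⟫ = 0 := (Submodule.mem_orthogonal W y).mp hy (w i) (hwW i)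
    rw [inner_add_right, real_inner_smul_right, h0]
    have h1 : ∀ i, ⟪w i, x₀⟫ + b i ≤ 0 := by rw [hPeq] at hx₀; exact hx₀
    linarith [h1 i]
  -- nSpan Pset = W
  have hnspan : nSpan Pset = W := by
    apply le_antisymm
    · rw [nSpan, Submodule.span_le]
      rintro v ⟨hv0, b', hb'⟩
      rw [SetLike.mem_coe, ← Submodule.orthogonal_orthogonal W]
      rw [Submodule.mem_orthogonal]
      intro y hy
      by_contra hvy
      have hyv : ⟪v, y⟫ ≠ 0 := fun h => hvy (by rw [real_inner_comm]; exact h)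
      set t : ℝ := -(⟪v, x₀⟫ + b') / ⟪v, y⟫ with ht
      have hmem := hline y hy t
      have := hb' _ hmem
      apply this
      rw [inner_add_right, real_inner_smul_right, ht]
      rw [div_mul_cancel₀ _ hyv]
      ring
    · rw [Submodule.span_le]
      rintro _ ⟨i, rfl⟩
      by_cases h0 : w i = 0
      · rw [SetLike.mem_coe, h0]; exact Submodule.zero_mem _
      · apply Submodule.subset_span
        refine ⟨h0, b i - 1, ?_⟩
        intro x hx
        have h1 : ∀ j, ⟪w j, x⟫ + b j ≤ 0 := by rw [hPeq] at hx; exact hx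
        have := h1 i
        intro hc
        linarith
  rw [hnspan]
  -- IsPointed ↔ Wᗮ = ⊥ ↔ W = ⊤ ↔ finrank W = n
  have hbot : IsPointed Pset ↔ Wᗮ = ⊥ := by
    rw [IsPointed, hlin]
    constructor
    · intro h
      rw [Submodule.eq_bot_iff]
      intro x hx
      have : x ∈ ({0} : Set (E n)) := h ▸ hx
      simpa using this
    · intro h
      rw [h]
      ext x
      simp
  rw [hbot, Submodule.orthogonal_eq_bot_iff]
  constructor
  · intro h
    rw [h, finrank_top]
    simp
  · intro h
    apply Submodule.eq_top_of_finrank_eq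
    rw [h]
    simp
end
end

section
/- (Farkas' Lemma III) Let A be an m × d real matrix, z ∈ ℝ^m, a₀ ∈ ℝ^d, z₀ ∈ ℝ. Then a₀ᵀx ≤ z₀ holds for all x ∈ ℝ^d with Ax ≤ z (coordinatewise) if and only if either (1) there exists a row vector c ≥ 0 with cA = a₀ᵀ and cz ≤ z₀, or (2) there exists a row vector c ≥ 0 with cA = 0 and cz < 0. -/
/-!
On a feasible system, validity of `a₀ ⬝ᵥ x ≤ z₀` is decided by whether `(a₀, z₀)` lies in the cone
spanned by the rows `(Aᵢ, zᵢ)` and `(0, 1)`. A finitely generated cone is closed, since every conic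
combination can be rewritten over generators on which the linear map is injective, so a point
outside it is separated from it by a vector `(y, s)`: for `s > 0` the point `-y / s` satisfies
`A x ≤ z` but violates the inequality, and for `s = 0` the direction `-y` violates it eventually
from any feasible point. Separating `(0, -1)` from the same cone shows that an infeasible system
has a certificate `c A = 0`, `c z < 0`.
-/

open Matrix

theorem exists_nonneg_sub_smul_eq_zero {ι : Type*} [Fintype ι] {c g : ι → ℝ} (hc : 0 ≤ c)
    (hg : g ≠ 0) : ∃ t : ℝ, ∃ j, g j ≠ 0 ∧ 0 ≤ c - t • g ∧ (c - t • g) j = 0 := by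
  wlog hpos : ∃ j, 0 < g j generalizing g
  · obtain ⟨j, hj⟩ := Function.ne_iff.mp hg
    obtain ⟨t, k, hk, hnonneg, hzero⟩ :=
      this (neg_ne_zero.mpr hg) ⟨j, by push Not at hpos; simpa using (hpos j).lt_of_ne hj⟩
    exact ⟨-t, k, by simpa using hk, by simpa using hnonneg, by simpa using hzero⟩
  -- the largest step keeping `c - t • g` nonnegative is the least ratio `c i / g i` with `g i > 0`
  obtain ⟨j, hj, hmin⟩ := Finset.exists_min_image {i | 0 < g i} (fun i => c i / g i)
    (by simpa [Finset.Nonempty] using hpos)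
  have hgj : 0 < g j := by simpa using hj
  have ht : 0 ≤ c j / g j := div_nonneg (hc j) hgj.le
  refine ⟨c j / g j, j, hgj.ne', fun i => ?_, by simp [div_mul_cancel₀ _ hgj.ne']⟩
  suffices c j / g j * g i ≤ c i by simpa using this
  rcases lt_or_ge 0 (g i) with hgi | hgi
  · calc c j / g j * g i ≤ c i / g i * g i :=
          mul_le_mul_of_nonneg_right (hmin i (by simpa using hgi)) hgi.le
      _ = c i := div_mul_cancel₀ _ hgi.ne'
  · exact (mul_nonpos_of_nonneg_of_nonpos ht hgi).trans (hc i)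

namespace LinearMap

variable {M E : Type*} [AddCommGroup M] [Module ℝ M] [TopologicalSpace M]
  [IsTopologicalAddGroup M] [ContinuousSMul ℝ M] [T2Space M]
  [AddCommGroup E] [Module ℝ E] [TopologicalSpace E]
  [IsTopologicalAddGroup E] [ContinuousSMul ℝ E] [T2Space E]

theorem isClosed_image_of_ker_domRestrict_eq_bot {V : Submodule ℝ M} [FiniteDimensional ℝ V]
    {f : M →ₗ[ℝ] E} (hf : ker (f.domRestrict V) = ⊥) {K : Set M} (hK : IsClosed K)
    (hKV : K ⊆ V) : IsClosed (f '' K) := by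
  have hKimage : f '' K = f.domRestrict V '' (Subtype.val ⁻¹' K) := by
    change f '' K = (f ∘ Subtype.val) '' _
    rw [Set.image_comp, Set.image_preimage_eq_of_subset (by simpa using hKV)]
  rw [hKimage]
  exact (isClosedEmbedding_of_injective hf).isClosedMap _ (hK.preimage continuous_subtype_val)

variable {ι : Type*} [Fintype ι]

theorem isClosed_image_nonneg_of_forall_notMem_eq_zero (f : (ι → ℝ) →ₗ[ℝ] E) (s : Finset ι) :
    IsClosed (f '' {c | 0 ≤ c ∧ ∀ i ∉ s, c i = 0}) := by
  classical
  induction s using Finset.strongInduction with | H s ih => ?_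
  set V : Submodule ℝ (ι → ℝ) := Submodule.pi (↑s)ᶜ fun _ => ⊥
  by_cases hV : ker (f.domRestrict V) = ⊥
  · exact f.isClosed_image_of_ker_domRestrict_eq_bot hV
      (isClosed_Ici.inter V.closed_of_finiteDimensional) fun c hc i hi => hc.2 i hi
  obtain ⟨⟨g, hgs⟩, hg, hg0⟩ := Submodule.ne_bot_iff _ |>.mp hV
  have hg : f g = 0 := hg
  have hg0 : g ≠ 0 := fun h => hg0 (by simp [h])
  have hgs : ∀ i ∉ s, g i = 0 := hgs
  -- a kernel vector supported on `s` lets every conic combination drop one index of `s`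
  suffices f '' {c | 0 ≤ c ∧ ∀ i ∉ s, c i = 0} =
      ⋃ j ∈ s, f '' {c | 0 ≤ c ∧ ∀ i ∉ s.erase j, c i = 0} by
    rw [this]
    exact isClosed_biUnion_finset fun j hj => ih _ (Finset.erase_ssubset hj)
  refine subset_antisymm ?_ (Set.iUnion₂_subset fun j _ => Set.image_mono fun c hc =>
    ⟨hc.1, fun i hi => hc.2 i fun h => hi (Finset.mem_of_mem_erase h)⟩)
  rintro _ ⟨c, ⟨hc, hcs⟩, rfl⟩
  obtain ⟨t, j, hgj, hnonneg, hzero⟩ := exists_nonneg_sub_smul_eq_zero hc hg0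
  refine Set.mem_biUnion (x := j) (by_contra fun hj => hgj (hgs j hj))
    ⟨c - t • g, ⟨hnonneg, fun i hi => ?_⟩, by simp [hg]⟩
  rcases eq_or_ne i j with rfl | hij
  · exact hzero
  · have his : i ∉ s := fun h => hi (Finset.mem_erase.mpr ⟨hij, h⟩)
    simp [hcs i his, hgs i his]

theorem isClosed_image_nonneg (f : (ι → ℝ) →ₗ[ℝ] E) : IsClosed (f '' {c | 0 ≤ c}) := by
  simpa using f.isClosed_image_nonneg_of_forall_notMem_eq_zero Finset.univ

end LinearMap

namespace Matrix

variable {ι κ : Type*} [Fintype κ]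

theorem mulVec_neg_inv_smul_le {A : Matrix ι κ ℝ} {z : ι → ℝ} {y : κ → ℝ} {s : ℝ} (hs : 0 < s)
    (hy : 0 ≤ A *ᵥ y + s • z) : A *ᵥ (-s⁻¹ • y) ≤ z := by
  intro i
  have hi : 0 ≤ (A *ᵥ y) i + s * z i := hy i
  simp only [mulVec_smul, Pi.smul_apply, smul_eq_mul]
  rw [neg_mul, inv_mul_eq_div, ← neg_div, div_le_iff₀ hs]
  linarith

variable [Fintype ι]

theorem vecMul_dotProduct_le {A : Matrix ι κ ℝ} {z c : ι → ℝ} {x : κ → ℝ} (hc : 0 ≤ c)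
    (hx : A *ᵥ x ≤ z) : c ᵥ* A ⬝ᵥ x ≤ c ⬝ᵥ z := by
  rw [← dotProduct_mulVec]
  exact dotProduct_le_dotProduct_of_nonneg_left hx hc

theorem farkas (B : Matrix ι κ ℝ) (b : κ → ℝ) :
    (∃ c, 0 ≤ c ∧ c ᵥ* B = b) ∨ ∃ y, 0 ≤ B *ᵥ y ∧ b ⬝ᵥ y < 0 := by
  classical
  refine or_iff_not_imp_left.mpr fun hb => ?_
  let C : ProperCone ℝ (κ → ℝ) :=
    ⟨(PointedCone.positive ℝ (ι → ℝ)).map B.vecMulLinear, B.vecMulLinear.isClosed_image_nonneg⟩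
  obtain ⟨φ, hφC, hφb⟩ :=
    C.hyperplane_separation_point (x₀ := b) fun ⟨c, hc, hcb⟩ => hb ⟨c, hc, hcb⟩
  obtain ⟨y, hy⟩ := (dotProductEquiv ℝ κ).surjective φ.toLinearMap
  have hφ : ∀ w, φ w = w ⬝ᵥ y := fun w => by
    rw [dotProduct_comm, ← ContinuousLinearMap.coe_coe, ← hy, dotProductEquiv_apply_apply]
  refine ⟨y, fun i => ?_, hφ b ▸ hφb⟩
  simpa [hφ, mulVec] using
    hφC (B i) ⟨Pi.single i 1, Pi.single_nonneg.mpr zero_le_one, single_one_vecMul i B⟩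

theorem farkas_inhomogeneous (A : Matrix ι κ ℝ) (z : ι → ℝ) (a : κ → ℝ) (t : ℝ) :
    (∃ c, 0 ≤ c ∧ c ᵥ* A = a ∧ c ⬝ᵥ z ≤ t) ∨
      ∃ y, ∃ s : ℝ, 0 ≤ s ∧ 0 ≤ A *ᵥ y + s • z ∧ a ⬝ᵥ y + s * t < 0 := by
  -- the slack `s` in `c ⬝ᵥ z ≤ t` becomes the coefficient of an extra row `(0, 1)`
  rcases (fromBlocks A (replicateCol Unit z) 0 (1 : Matrix Unit Unit ℝ)).farkas
    (Sum.elim a fun _ => t) with ⟨c, hc, hcb⟩ | ⟨y, hy, hyb⟩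
  · rw [vecMul_fromBlocks] at hcb
    have hcz := congrFun hcb (Sum.inr ())
    simp only [vecMul_zero, add_zero, mulVec_replicateCol_eq_const, vecMul_one, Pi.add_apply,
      Function.const_apply, Function.comp_apply, Sum.elim_inr] at hcz
    refine .inl ⟨c ∘ Sum.inl, fun i => hc _,
      funext fun k => by simpa using congrFun hcb (Sum.inl k), ?_⟩
    linarith [show 0 ≤ c (Sum.inr ()) from hc _]
  · rw [← Sum.elim_comp_inl_inr y, sumElim_dotProduct_sumElim] at hyb
    rw [fromBlocks_mulVec] at hy
    refine .inr ⟨y ∘ Sum.inl, y (Sum.inr ()), by simpa using hy (Sum.inr ()),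
      fun i => by simpa [mulVec, dotProduct, mul_comm] using hy (Sum.inl i), ?_⟩
    simpa [mul_comm] using hyb

variable {A : Matrix ι κ ℝ} {z : ι → ℝ}

theorem farkas_of_feasible {x₀ : κ → ℝ} (hx₀ : A *ᵥ x₀ ≤ z) (a : κ → ℝ) (t : ℝ) :
    (∃ c, 0 ≤ c ∧ c ᵥ* A = a ∧ c ⬝ᵥ z ≤ t) ∨ ∃ x, A *ᵥ x ≤ z ∧ t < a ⬝ᵥ x := by
  refine (A.farkas_inhomogeneous z a t).imp_right fun ⟨y, s, hs, hy, hyt⟩ => ?_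
  rcases hs.eq_or_lt with rfl | hs
  · -- `-y` is a recession direction of `A x ≤ z` along which `a ⬝ᵥ x` grows without bound
    simp only [zero_smul, add_zero, zero_mul] at hy hyt
    set r := (|t - a ⬝ᵥ x₀| + 1) / -(a ⬝ᵥ y)
    have hr : 0 ≤ r := div_nonneg (by positivity) (by linarith)
    refine ⟨x₀ - r • y, fun i => ?_, ?_⟩
    · have : 0 ≤ r * (A *ᵥ y) i := mul_nonneg hr (hy i)
      simp only [mulVec_sub, mulVec_smul, Pi.sub_apply, Pi.smul_apply, smul_eq_mul]
      linarith [hx₀ i]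
    · have : r * -(a ⬝ᵥ y) = |t - a ⬝ᵥ x₀| + 1 := div_mul_cancel₀ _ (by linarith)
      simp only [dotProduct_sub, dotProduct_smul, smul_eq_mul]
      linarith [le_abs_self (t - a ⬝ᵥ x₀)]
  · refine ⟨-s⁻¹ • y, mulVec_neg_inv_smul_le hs hy, ?_⟩
    rw [dotProduct_smul, smul_eq_mul, neg_mul, inv_mul_eq_div, ← neg_div, lt_div_iff₀ hs]
    linarith

theorem farkas_feasibility (A : Matrix ι κ ℝ) (z : ι → ℝ) :
    (∃ x, A *ᵥ x ≤ z) ∨ ∃ c, 0 ≤ c ∧ c ᵥ* A = 0 ∧ c ⬝ᵥ z < 0 := by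
  rcases A.farkas_inhomogeneous z 0 (-1) with ⟨c, hc, hcA, hcz⟩ | ⟨y, s, -, hy, hys⟩
  · exact .inr ⟨c, hc, hcA, by linarith⟩
  · exact .inl ⟨_, mulVec_neg_inv_smul_le (by simpa using hys) hy⟩

end Matrix

/-- Farkas' Lemma III: the inequality a₀ᵀx ≤ z₀ is valid on the solution set of
Ax ≤ z iff it is a nonnegative combination of the rows of the system, or the
system is infeasible as witnessed by a nonnegative combination. -/
theorem farkas_III {m d : ℕ} (A : Matrix (Fin m) (Fin d) ℝ) (z : Fin m → ℝ)
    (a₀ : Fin d → ℝ) (z₀ : ℝ) :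
    (∀ x : Fin d → ℝ, A.mulVec x ≤ z → a₀ ⬝ᵥ x ≤ z₀) ↔
      ((∃ c : Fin m → ℝ, 0 ≤ c ∧ Matrix.vecMul c A = a₀ ∧ c ⬝ᵥ z ≤ z₀) ∨
       (∃ c : Fin m → ℝ, 0 ≤ c ∧ Matrix.vecMul c A = 0 ∧ c ⬝ᵥ z < 0)) := by
  constructor
  · intro hvalid
    rcases A.farkas_feasibility z with ⟨x₀, hx₀⟩ | hinfeasible
    · refine .inl ((farkas_of_feasible hx₀ a₀ z₀).resolve_right ?_)
      rintro ⟨x, hx, hlt⟩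
      exact (hvalid x hx).not_gt hlt
    · exact .inr hinfeasible
  · rintro (⟨c, hc, rfl, hcz⟩ | ⟨c, hc, hcA, hcz⟩) x hx
    · exact (vecMul_dotProduct_le hc hx).trans hcz
    · have := vecMul_dotProduct_le hc hx
      rw [hcA, zero_dotProduct] at this
      linarith
end

section
/- (Pointedness Dichotomy) Let 𝒞 be a connected polyhedral complex in ℝ^n. If rank(𝒞) = n then every cell of 𝒞 is pointed; otherwise every cell of 𝒞 is unpointed. Equivalently, either all cells of a connected polyhedral complex in ℝ^n are pointed or none are. -/
open scoped RealInnerProductSpace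
open Set

noncomputable section

/-- A polyhedral complex in ℝⁿ: a finite family of nonempty polyhedral sets, closed
under taking (nonempty) faces, in which any two cells intersect in a common face. -/
def IsPolyComplex {n : ℕ} (cells : Set (Set (E n))) : Prop :=
  cells.Finite ∧
  (∀ C ∈ cells, IsPolyhedral C ∧ C.Nonempty) ∧
  (∀ C ∈ cells, ∀ F, IsFace C F → F.Nonempty → F ∈ cells) ∧
  (∀ C ∈ cells, ∀ D ∈ cells, IsFace C (C ∩ D) ∧ IsFace D (C ∩ D))

-- key geometric lemma: a direction in the recession cone satisfies every valid inequality
lemma cone_ineq {n : ℕ} {P : Set (E n)} {w : E n} {b : ℝ}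
    (hP : P.Nonempty) (hw : ∀ x ∈ P, ⟪w, x⟫ + b ≤ 0) {y : E n}
    (hy : y ∈ charCone P) : ⟪w, y⟫ ≤ 0 := by
  obtain ⟨x, hx⟩ := hP
  have hk : ∀ k : ℕ, x + (k : ℝ) • y ∈ P := by
    intro k
    induction k with
    | zero => simpa using hx
    | succ k ih =>
      have h1 := hy _ ih
      have : x + ((k : ℝ) + 1) • y = x + (k : ℝ) • y + y := by module
      rw [show ((k + 1 : ℕ) : ℝ) = (k : ℝ) + 1 by push_cast; ring, this]
      exact h1
  by_contra h
  push_neg at h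
  obtain ⟨k, hk'⟩ := exists_nat_gt ((-(⟪w, x⟫ + b)) / ⟪w, y⟫)
  have h2 := hw _ (hk k)
  rw [inner_add_right, real_inner_smul_right] at h2
  rw [div_lt_iff₀ h] at hk'
  linarith

lemma lin_mem_iff {n m : ℕ} {w : Fin m → E n} {b : Fin m → ℝ}
    (hP : Set.Nonempty {x : E n | ∀ i, ⟪w i, x⟫ + b i ≤ 0}) (y : E n) :
    y ∈ linealitySpace {x : E n | ∀ i, ⟪w i, x⟫ + b i ≤ 0} ↔ ∀ i, ⟪w i, y⟫ = 0 := by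
  constructor
  · rintro ⟨h1, h2⟩ i
    have ha : ⟪w i, y⟫ ≤ 0 :=
      cone_ineq hP (fun x hx => hx i) h1
    have hb : ⟪w i, -y⟫ ≤ 0 :=
      cone_ineq hP (fun x hx => hx i) h2
    rw [inner_neg_right] at hb
    linarith
  · intro h
    constructor
    · intro x hx i
      rw [inner_add_right, h i]
      simpa using hx i
    · intro x hx i
      rw [inner_add_right, inner_neg_right, h i]
      simpa using hx i

lemma zero_mem_lin {n : ℕ} {P : Set (E n)} : (0 : E n) ∈ linealitySpace P := by
  constructor <;> · intro x hx; simpa using hx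

lemma pointed_of_full {n : ℕ} {P : Set (E n)} (hpoly : IsPolyhedral P) (hne : P.Nonempty)
    (hrk : Module.finrank ℝ (nSpan P) = n) : IsPointed P := by
  obtain ⟨m, w, b, rfl⟩ := hpoly
  rw [IsPointed, Set.eq_singleton_iff_unique_mem]
  refine ⟨zero_mem_lin, fun y hy => ?_⟩
  have hwy : ∀ i, ⟪w i, y⟫ = 0 := (lin_mem_iff hne y).mp hy
  -- y is orthogonal to every generator of nSpan
  have hgen : ∀ v ∈ {v : E n | v ≠ 0 ∧ ∃ c : ℝ, ∀ x ∈ {x : E n | ∀ i, ⟪w i, x⟫ + b i ≤ 0},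
      ⟪v, x⟫ + c ≠ 0}, ⟪v, y⟫ = 0 := by
    rintro v ⟨hv0, c, hvc⟩
    obtain ⟨x, hx⟩ := hne
    by_contra hvy
    -- x + t • y ∈ P for all t
    have hmem : ∀ t : ℝ, x + t • y ∈ {x : E n | ∀ i, ⟪w i, x⟫ + b i ≤ 0} := by
      intro t i
      rw [mem_setOf_eq] at hx
      rw [inner_add_right, real_inner_smul_right, hwy i]
      simpa using hx i
    have := hvc _ (hmem ((-(⟪v, x⟫ + c)) / ⟪v, y⟫))
    rw [inner_add_right, real_inner_smul_right, div_mul_cancel₀ _ hvy] at this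
    exact this (by ring)
  have htop : nSpan {x : E n | ∀ i, ⟪w i, x⟫ + b i ≤ 0} = ⊤ := by
    apply Submodule.eq_top_of_finrank_eq
    rw [hrk, finrank_euclideanSpace_fin]
  have hle : nSpan {x : E n | ∀ i, ⟪w i, x⟫ + b i ≤ 0} ≤ (ℝ ∙ y)ᗮ :=
    Submodule.span_le.mpr fun v hv =>
      Submodule.mem_orthogonal_singleton_iff_inner_left.mpr (hgen v hv)
  have : y ∈ (ℝ ∙ y)ᗮ := hle (htop ▸ Submodule.mem_top)
  have := Submodule.mem_orthogonal_singleton_iff_inner_right.mp this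
  exact inner_self_eq_zero.mp this

lemma unpointed_of_notfull {n : ℕ} {P : Set (E n)} (hpoly : IsPolyhedral P) (hne : P.Nonempty)
    (hrk : Module.finrank ℝ (nSpan P) ≠ n) : ¬ IsPointed P := by
  obtain ⟨m, w, b, rfl⟩ := hpoly
  set P := {x : E n | ∀ i, ⟪w i, x⟫ + b i ≤ 0} with hPdef
  have hnetop : nSpan P ≠ ⊤ := by
    intro h
    rw [h, finrank_top, finrank_euclideanSpace_fin] at hrk
    exact hrk rfl
  have hbot : (nSpan P)ᗮ ≠ ⊥ := fun h => hnetop (Submodule.orthogonal_eq_bot_iff.mp h)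
  obtain ⟨y, hy, hy0⟩ := Submodule.exists_mem_ne_zero_of_ne_bot hbot
  have hwy : ∀ i, ⟪w i, y⟫ = 0 := by
    intro i
    by_cases hwi : w i = 0
    · rw [hwi, inner_zero_left]
    · refine (Submodule.mem_orthogonal _ _).mp hy (w i) (Submodule.subset_span ?_)
      refine ⟨hwi, b i - 1, fun x hx => ?_⟩
      have := hx i
      intro hc
      linarith
  intro hpt
  rw [IsPointed] at hpt
  have : y ∈ linealitySpace P := (lin_mem_iff hne y).mpr hwy
  rw [hpt] at this
  exact hy0 this

lemma lin_face_eq {n : ℕ} {C F : Set (E n)} (hpoly : IsPolyhedral C) (hCne : C.Nonempty)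
    (hF : IsFace C F) (hFne : F.Nonempty) : linealitySpace F = linealitySpace C := by
  rcases hF with h | h | ⟨ws, bs, ⟨hws0, hwsle, _⟩, hFdef⟩
  · exact absurd (h ▸ hFne) (by simp)
  · rw [h]
  · obtain ⟨m, w, b, hCdef⟩ := hpoly
    ext y
    constructor
    · rintro ⟨h1, h2⟩
      have hFsub : ∀ x ∈ F, ∀ i, ⟪w i, x⟫ + b i ≤ 0 := by
        intro x hx i
        have : x ∈ C := (hFdef ▸ hx).1
        exact (hCdef ▸ this) i
      have hwy : ∀ i, ⟪w i, y⟫ = 0 := by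
        intro i
        have ha := cone_ineq hFne (fun x hx => hFsub x hx i) h1
        have hb := cone_ineq hFne (fun x hx => hFsub x hx i) h2
        rw [inner_neg_right] at hb
        linarith
      rw [hCdef]
      exact (lin_mem_iff (hCdef ▸ hCne) y).mpr hwy
    · intro hy
      obtain ⟨h1, h2⟩ := hy
      have hwsy : ⟪ws, y⟫ = 0 := by
        have ha := cone_ineq hCne hwsle h1
        have hb := cone_ineq hCne hwsle h2
        rw [inner_neg_right] at hb
        linarith
      constructor
      · intro x hx
        rw [hFdef] at hx ⊢
        refine ⟨h1 x hx.1, ?_⟩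
        rw [inner_add_right, hwsy]
        simpa using hx.2
      · intro x hx
        rw [hFdef] at hx ⊢
        refine ⟨h2 x hx.1, ?_⟩
        rw [inner_add_right, inner_neg_right, hwsy]
        simpa using hx.2

lemma polyhedral_closed {n : ℕ} {P : Set (E n)} (h : IsPolyhedral P) : IsClosed P := by
  obtain ⟨m, w, b, rfl⟩ := h
  have : {x : E n | ∀ i, ⟪w i, x⟫ + b i ≤ 0} = ⋂ i, {x : E n | ⟪w i, x⟫ + b i ≤ 0} := by
    ext x; simp
  rw [this]
  refine isClosed_iInter fun i => isClosed_le ?_ continuous_const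
  exact ((continuous_const.inner continuous_id).add continuous_const)

theorem pointedness_dichotomy' {n : ℕ} (cells : Set (Set (E n)))
    (hcx : cells.Finite ∧
      (∀ C ∈ cells, IsPolyhedral C ∧ C.Nonempty) ∧
      (∀ C ∈ cells, ∀ F, IsFace C F → F.Nonempty → F ∈ cells) ∧
      (∀ C ∈ cells, ∀ D ∈ cells, IsFace C (C ∩ D) ∧ IsFace D (C ∩ D)))
    (hconn : IsConnected (⋃₀ cells)) :
    ((∀ C ∈ cells, Module.finrank ℝ (nSpan C) = n) → ∀ C ∈ cells, IsPointed C) ∧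
    ((∀ C ∈ cells, Module.finrank ℝ (nSpan C) ≠ n) → ∀ C ∈ cells, ¬ IsPointed C) ∧
    ((∀ C ∈ cells, IsPointed C) ∨ (∀ C ∈ cells, ¬ IsPointed C)) := by
  obtain ⟨hfin, hpoly, hface, hmeet⟩ := hcx
  refine ⟨fun h C hC => pointed_of_full (hpoly C hC).1 (hpoly C hC).2 (h C hC),
    fun h C hC => unpointed_of_notfull (hpoly C hC).1 (hpoly C hC).2 (h C hC), ?_⟩
  by_cases hall : ∀ C ∈ cells, IsPointed C
  · exact Or.inl hall
  push_neg at hall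
  obtain ⟨C0, hC0, hC0np⟩ := hall
  refine Or.inr fun D hD hDp => ?_
  -- two closed sets
  set A : Set (E n) := ⋃ C ∈ {C ∈ cells | IsPointed C}, C with hA
  set B : Set (E n) := ⋃ C ∈ {C ∈ cells | ¬ IsPointed C}, C with hB
  have hAcl : IsClosed A :=
    Set.Finite.isClosed_biUnion (hfin.subset (sep_subset _ _))
      (fun C hC => polyhedral_closed (hpoly C hC.1).1)
  have hBcl : IsClosed B :=
    Set.Finite.isClosed_biUnion (hfin.subset (sep_subset _ _))
      (fun C hC => polyhedral_closed (hpoly C hC.1).1)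
  have hcover : ⋃₀ cells ⊆ A ∪ B := by
    rintro x ⟨C, hC, hxC⟩
    by_cases hp : IsPointed C
    · exact Or.inl (mem_biUnion ⟨hC, hp⟩ hxC)
    · exact Or.inr (mem_biUnion ⟨hC, hp⟩ hxC)
  have hAne : (⋃₀ cells ∩ A).Nonempty := by
    obtain ⟨x, hx⟩ := (hpoly D hD).2
    exact ⟨x, ⟨D, hD, hx⟩, mem_biUnion ⟨hD, hDp⟩ hx⟩
  have hBne : (⋃₀ cells ∩ B).Nonempty := by
    obtain ⟨x, hx⟩ := (hpoly C0 hC0).2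
    exact ⟨x, ⟨C0, hC0, hx⟩, mem_biUnion ⟨hC0, hC0np⟩ hx⟩
  obtain ⟨x, -, hxAB⟩ :=
    (isPreconnected_closed_iff.mp hconn.2) A B hAcl hBcl hcover hAne hBne
  obtain ⟨hxA, hxB⟩ := hxAB
  simp only [hA, hB, mem_iUnion, exists_prop] at hxA hxB
  obtain ⟨C, ⟨hC, hCp⟩, hxC⟩ := hxA
  obtain ⟨D', ⟨hD', hD'p⟩, hxD⟩ := hxB
  have hGne : (C ∩ D').Nonempty := ⟨x, hxC, hxD⟩
  have h1 := lin_face_eq (hpoly C hC).1 (hpoly C hC).2 (hmeet C hC D' hD').1 hGne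
  have h2 := lin_face_eq (hpoly D' hD').1 (hpoly D' hD').2 (hmeet C hC D' hD').2 hGne
  exact hD'p (by rw [IsPointed, ← h2, h1, hCp])

/-- Pointedness dichotomy: in a connected polyhedral complex in ℝⁿ, if the (common)
normal span of the cells has dimension n then every cell is pointed, and otherwise
every cell is unpointed. In particular all cells are pointed or none are. -/
theorem pointedness_dichotomy {n : ℕ} (cells : Set (Set (E n)))
    (hcx : IsPolyComplex cells) (hconn : IsConnected (⋃₀ cells)) :
    ((∀ C ∈ cells, Module.finrank ℝ (nSpan C) = n) → ∀ C ∈ cells, IsPointed C) ∧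
    ((∀ C ∈ cells, Module.finrank ℝ (nSpan C) ≠ n) → ∀ C ∈ cells, ¬ IsPointed C) ∧
    ((∀ C ∈ cells, IsPointed C) ∨ (∀ C ∈ cells, ¬ IsPointed C)) :=
  pointedness_dichotomy' cells hcx hconn
end
end

section
/- Let 𝒞 be a polyhedral complex in ℝ^n in which all cells are pointed. Then the compact part com.part(𝒞) = ∪_{C ∈ 𝒞} (faces of K_C), where K_C is the convex hull of the vertices of C, is a polytopal complex: every face of each of its polytopes belongs to it, and the intersection of any two of its polytopes is a face of both. -/
open scoped RealInnerProductSpace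
open Set

noncomputable section

/-- The cells of the compact part: all faces of the polytopes K_C, C a cell. -/
def compactPartCells {n : ℕ} (cells : Set (Set (E n))) : Set (Set (E n)) :=
  {A | A.Nonempty ∧ ∃ C ∈ cells, IsFace (Kpart C) A}

/-!
Every face of a set `P`, including `∅` and `P`, is the zero set in `P` of an affine functional
that is nonpositive on `P`. Faces of a polytope `conv S` are transitive: perturb the functional
exposing the outer face by a small multiple of the one exposing the inner face. Nonempty faces of a
polyhedron are exactly the sets where some of its defining inequalities are tight; hence faces of
polyhedra are transitive and polyhedra have finitely many vertices, and for a face `F` of a cell `C`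
one gets `K_F = K_C ∩ F`. For faces `A` of `K_C` and `B` of `K_D`, `A ∩ B` then lies in
`L = K_{C ∩ D}`, a common face of `K_C` and `K_D`, where it is the intersection of the faces
`L ∩ A` and `L ∩ B`.
-/

open Filter Topology

section

variable {n : ℕ}

lemma convex_setOf_inner_add_nonpos (w : E n) (b : ℝ) :
    Convex ℝ {x : E n | ⟪w, x⟫ + b ≤ 0} := by
  simpa only [← le_neg_iff_add_nonpos_right, innerₛₗ_apply_apply] using
    convex_halfSpace_le (innerₛₗ ℝ w).isLinear (-b)

lemma convex_setOf_inner_add_eq_zero (w : E n) (b : ℝ) :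
    Convex ℝ {x : E n | ⟪w, x⟫ + b = 0} := by
  simpa only [← eq_neg_iff_add_eq_zero, innerₛₗ_apply_apply] using
    convex_hyperplane (innerₛₗ ℝ w).isLinear (-b)

/-- Allowing `w = 0` absorbs the two degenerate faces: `b = 0` gives `P`, `b = -1` gives `∅`. -/
lemma isFace_iff {P F : Set (E n)} :
    IsFace P F ↔ ∃ (w : E n) (b : ℝ), (∀ x ∈ P, ⟪w, x⟫ + b ≤ 0) ∧
      F = {x ∈ P | ⟪w, x⟫ + b = 0} := by
  constructor
  · rintro (rfl | rfl | ⟨w, b, ⟨-, hle, -⟩, rfl⟩)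
    · exact ⟨0, -1, by simp, by simp⟩
    · exact ⟨0, 0, by simp, by simp⟩
    · exact ⟨w, b, hle, rfl⟩
  · rintro ⟨w, b, hle, rfl⟩
    by_cases hw : w = 0
    · subst hw
      by_cases hb : b = 0 <;> simp [IsFace, hb]
    by_cases hex : ∃ x ∈ P, ⟪w, x⟫ + b = 0
    · exact Or.inr (Or.inr ⟨w, b, ⟨hw, hle, hex⟩, rfl⟩)
    · exact Or.inl (eq_empty_of_forall_notMem fun x hx => hex ⟨x, hx⟩)

lemma IsFace.subset {P F : Set (E n)} (h : IsFace P F) : F ⊆ P := by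
  obtain ⟨w, b, -, rfl⟩ := isFace_iff.1 h
  exact sep_subset _ _

lemma IsFace.convex {P F : Set (E n)} (hP : Convex ℝ P) (h : IsFace P F) : Convex ℝ F := by
  obtain ⟨w, b, -, rfl⟩ := isFace_iff.1 h
  exact hP.inter (convex_setOf_inner_add_eq_zero w b)

lemma IsFace.inter_of_subset {K F G : Set (E n)} (hG : IsFace K G) (hF : F ⊆ K) :
    IsFace F (F ∩ G) := by
  obtain ⟨w, b, hle, rfl⟩ := isFace_iff.1 hG
  refine isFace_iff.2 ⟨w, b, fun x hx => hle x (hF hx), ?_⟩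
  ext x
  simp only [mem_inter_iff, mem_sep_iff]
  exact ⟨fun ⟨hx, _, h⟩ => ⟨hx, h⟩, fun ⟨hx, h⟩ => ⟨hx, hF hx, h⟩⟩

lemma mem_convexHull_sep_of_nonpos {S : Set (E n)} {w : E n} {b : ℝ}
    (hle : ∀ s ∈ S, ⟪w, s⟫ + b ≤ 0) {x : E n} (hx : x ∈ convexHull ℝ S)
    (hx0 : ⟪w, x⟫ + b = 0) : x ∈ convexHull ℝ {s ∈ S | ⟪w, s⟫ + b = 0} := by
  classical
  rw [convexHull_eq] at hx
  obtain ⟨ι, t, μ, z, hμ0, hμ1, hzS, rfl⟩ := hx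
  have hsum : ∑ i ∈ t, μ i * (⟪w, z i⟫ + b) = 0 := by
    rw [← hx0, Finset.centerMass_eq_of_sum_1 _ _ hμ1]
    simp only [mul_add, Finset.sum_add_distrib, inner_sum, real_inner_smul_right, ← Finset.sum_mul,
      hμ1, one_mul]
  have hterm := (Finset.sum_eq_zero_iff_of_nonpos fun i hi =>
    mul_nonpos_of_nonneg_of_nonpos (hμ0 i hi) (hle _ (hzS i hi))).1 hsum
  rw [← Finset.centerMass_filter_ne_zero]
  refine Finset.centerMass_mem_convexHull _ (fun i hi => hμ0 i (Finset.mem_filter.1 hi).1)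
    (by rw [Finset.sum_filter_ne_zero, hμ1]; exact one_pos) fun i hi => ?_
  obtain ⟨hi, hμi⟩ := Finset.mem_filter.1 hi
  exact ⟨hzS i hi, (mul_eq_zero.1 (hterm i hi)).resolve_left hμi⟩

lemma IsFace.eq_convexHull_inter {S F : Set (E n)} (hF : IsFace (convexHull ℝ S) F) :
    F = convexHull ℝ (S ∩ F) := by
  obtain ⟨w, b, hle, rfl⟩ := isFace_iff.1 hF
  refine Subset.antisymm (fun x hx => ?_) ?_
  · refine convexHull_mono ?_ (mem_convexHull_sep_of_nonpos
      (fun s hs => hle s (subset_convexHull ℝ S hs)) hx.1 hx.2)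
    exact fun s hs => ⟨hs.1, subset_convexHull ℝ S hs.1, hs.2⟩
  · exact convexHull_min (fun s hs => hs.2)
      ((convex_convexHull ℝ S).inter (convex_setOf_inner_add_eq_zero w b))

lemma exists_pos_forall_add_mul_neg {ι : Type*} {s : Set ι} (hs : s.Finite) (a c : ι → ℝ) :
    ∃ ε : ℝ, 0 < ε ∧ ∀ i ∈ s, a i < 0 → a i + ε * c i < 0 := by
  have hev : ∀ i ∈ s, ∀ᶠ ε in 𝓝 (0 : ℝ), a i < 0 → a i + ε * c i < 0 := by
    intro i _
    by_cases ha : a i < 0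
    · have hlim : Tendsto (fun ε => a i + ε * c i) (𝓝 0) (𝓝 (a i + 0 * c i)) :=
        tendsto_const_nhds.add (tendsto_id.mul_const (c i))
      rw [zero_mul, add_zero] at hlim
      exact (hlim.eventually (gt_mem_nhds ha)).mono fun _ h _ => h
    · exact Eventually.of_forall fun _ h => absurd h ha
  obtain ⟨ε, hε, hε0⟩ := (((eventually_all_finite hs).2 hev).filter_mono nhdsWithin_le_nhds
    |>.and (self_mem_nhdsWithin : ∀ᶠ ε in 𝓝[>] (0 : ℝ), 0 < ε)).exists
  exact ⟨ε, hε0, hε⟩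

lemma exists_mem_forall_inner_add_neg {ι : Type*} {w : ι → E n} {b : ι → ℝ} {G : Set (E n)}
    (hG : Convex ℝ G) (hne : G.Nonempty) (s : Finset ι) (hle : ∀ i ∈ s, ∀ x ∈ G, ⟪w i, x⟫ + b i ≤ 0)
    (hlt : ∀ i ∈ s, ∃ y ∈ G, ⟪w i, y⟫ + b i < 0) :
    ∃ z ∈ G, ∀ i ∈ s, ⟪w i, z⟫ + b i < 0 := by
  classical
  induction s using Finset.induction_on with
  | empty => exact hne.imp fun x hx => ⟨hx, by simp⟩
  | insert j s _ ih =>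
    obtain ⟨z, hzG, hz⟩ := ih (fun i hi => hle i (Finset.mem_insert_of_mem hi))
      fun i hi => hlt i (Finset.mem_insert_of_mem hi)
    obtain ⟨y, hyG, hy⟩ := hlt j (Finset.mem_insert_self j s)
    refine ⟨(1 / 2 : ℝ) • z + (1 / 2 : ℝ) • y, hG hzG hyG (by norm_num) (by norm_num) (by norm_num),
      fun i hi => ?_⟩
    rw [inner_add_right, real_inner_smul_right, real_inner_smul_right]
    have hzi := hle i hi z hzG
    have hyi := hle i hi y hyG
    rcases Finset.mem_insert.1 hi with rfl | hi
    · linarith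
    · linarith [hz i hi]

/-- `ε` is small enough for the perturbed functional to stay negative at the finitely many
points of `S` off `F`. -/
lemma IsFace.trans_convexHull {S F G : Set (E n)} (hS : S.Finite)
    (hF : IsFace (convexHull ℝ S) F) (hG : IsFace F G) : IsFace (convexHull ℝ S) G := by
  obtain ⟨w, b, hwle, rfl⟩ := isFace_iff.1 hF
  obtain ⟨u, c, hule, rfl⟩ := isFace_iff.1 hG
  obtain ⟨ε, hε, hεneg⟩ :=
    exists_pos_forall_add_mul_neg hS (fun x => ⟪w, x⟫ + b) (fun x => ⟪u, x⟫ + c)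
  have hν : ∀ x : E n, ⟪w + ε • u, x⟫ + (b + ε * c) = ⟪w, x⟫ + b + ε * (⟪u, x⟫ + c) := fun x => by
    rw [inner_add_left, real_inner_smul_left]; ring
  have hνS : ∀ s ∈ S, ⟪w + ε • u, s⟫ + (b + ε * c) ≤ 0 := by
    intro s hs
    rw [hν]
    rcases (hwle s (subset_convexHull ℝ S hs)).lt_or_eq with hlt | heq
    · exact (hεneg s hs hlt).le
    · rw [heq, zero_add]
      exact mul_nonpos_of_nonneg_of_nonpos hε.le (hule s ⟨subset_convexHull ℝ S hs, heq⟩)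
  refine isFace_iff.2 ⟨w + ε • u, b + ε * c, fun x hx => convexHull_min hνS
    (convex_setOf_inner_add_nonpos _ _) hx, Subset.antisymm ?_ ?_⟩
  · rintro x ⟨⟨hxK, hxw⟩, hxu⟩
    exact ⟨hxK, by rw [hν, hxw, hxu]; ring⟩
  · rintro x ⟨hxK, hx0⟩
    have hGconv := ((convex_convexHull ℝ S).inter (convex_setOf_inner_add_eq_zero w b)).inter
      (convex_setOf_inner_add_eq_zero u c)
    refine convexHull_min ?_ hGconv (mem_convexHull_sep_of_nonpos hνS hxK hx0)
    rintro s ⟨hs, hs0⟩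
    rw [hν] at hs0
    have hsw : ⟪w, s⟫ + b = 0 := by
      by_contra hne
      exact (hεneg s hs ((hwle s (subset_convexHull ℝ S hs)).lt_of_ne hne)).ne hs0
    rw [hsw, zero_add] at hs0
    exact ⟨⟨subset_convexHull ℝ S hs, hsw⟩, (mul_eq_zero.1 hs0).resolve_left hε.ne'⟩

section TightFace

variable {ι : Type*} (w : ι → E n) (b : ι → ℝ)

def tightFace (I : Set ι) : Set (E n) :=
  {x | (∀ i, ⟪w i, x⟫ + b i ≤ 0) ∧ ∀ i ∈ I, ⟪w i, x⟫ + b i = 0}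

lemma tightFace_empty : tightFace w b ∅ = {x | ∀ i, ⟪w i, x⟫ + b i ≤ 0} := by
  simp [tightFace]

variable [Finite ι]

lemma isFace_tightFace (I : Set ι) : IsFace (tightFace w b ∅) (tightFace w b I) := by
  set s := (toFinite I).toFinset
  have hsum : ∀ x : E n, ⟪∑ i ∈ s, w i, x⟫ + ∑ i ∈ s, b i = ∑ i ∈ s, (⟪w i, x⟫ + b i) := by
    simp only [sum_inner, Finset.sum_add_distrib, implies_true]
  refine isFace_iff.2 ⟨∑ i ∈ s, w i, ∑ i ∈ s, b i, fun x hx => ?_, ?_⟩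
  · rw [hsum]
    exact Finset.sum_nonpos fun i _ => hx.1 i
  · ext x
    simp only [tightFace, mem_ofPred_eq, hsum, mem_empty_iff_false, false_imp_iff,
      implies_true, and_true]
    refine and_congr_right fun hle => ?_
    rw [Finset.sum_eq_zero_iff_of_nonpos fun i _ => hle i]
    simp only [s, Finite.mem_toFinset]

lemma convex_tightFace (I : Set ι) : Convex ℝ (tightFace w b I) := by
  refine (isFace_tightFace w b I).convex ?_
  rw [tightFace_empty, ofPred_forall]
  exact convex_iInter fun i => convex_setOf_inner_add_nonpos _ _

variable {w b}

lemma exists_tightFace_eq_of_isFace {I : Set ι} {G : Set (E n)}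
    (hG : IsFace (tightFace w b I) G) (hne : G.Nonempty) : ∃ J, G = tightFace w b J := by
  obtain ⟨u, c, hule, rfl⟩ := isFace_iff.1 hG
  set G := {x ∈ tightFace w b I | ⟪u, x⟫ + c = 0}
  set J := {i | ∀ x ∈ G, ⟪w i, x⟫ + b i = 0}
  refine ⟨J, Subset.antisymm (fun x hx => ⟨hx.1.1, fun i hi => hi x hx⟩) ?_⟩
  rintro p ⟨hpP, hpJ⟩
  have hpI : p ∈ tightFace w b I := ⟨hpP, fun i hi => hpJ i fun x hx => hx.1.2 i hi⟩
  refine ⟨hpI, le_antisymm (hule p hpI) ?_⟩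
  obtain ⟨z, hzG, hzJ⟩ := exists_mem_forall_inner_add_neg
    ((convex_tightFace w b I).inter (convex_setOf_inner_add_eq_zero u c)) hne (toFinite Jᶜ).toFinset
    (fun i _ x hx => hx.1.1 i) fun i hi => by
      simp only [Finite.mem_toFinset, mem_compl_iff, J, mem_ofPred_eq, not_forall] at hi
      obtain ⟨x, hxG, hx⟩ := hi
      exact ⟨x, hxG, (hxG.1.1 i).lt_of_ne hx⟩
  -- `z` is strict off `J`, so `z + t • (z - p)` stays in `tightFace w b I` for small `t > 0`.
  obtain ⟨t, ht, htJ⟩ := exists_pos_forall_add_mul_neg (toFinite Jᶜ)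
    (fun i => ⟪w i, z⟫ + b i) (fun i => (⟪w i, z⟫ + b i) - (⟪w i, p⟫ + b i))
  have hmove : ∀ (v : E n) (d : ℝ), ⟪v, z + t • (z - p)⟫ + d =
      (⟪v, z⟫ + d) + t * ((⟪v, z⟫ + d) - (⟪v, p⟫ + d)) := fun v d => by
    rw [inner_add_right, real_inner_smul_right, inner_sub_right]; ring
  have hzt : z + t • (z - p) ∈ tightFace w b I := by
    refine ⟨fun i => ?_, fun i hi => ?_⟩
    · rw [hmove]
      by_cases hi : i ∈ J
      · rw [hi z hzG, hpJ i hi]; simp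
      · exact (htJ i hi (hzJ i (by simpa using hi))).le
    · rw [hmove, hzG.1.2 i hi, hpI.2 i hi]; ring
  have := hule _ hzt
  rw [hmove, hzG.2] at this
  nlinarith

end TightFace

lemma IsPolyhedral.convex {P : Set (E n)} (hP : IsPolyhedral P) : Convex ℝ P := by
  obtain ⟨m, w, b, rfl⟩ := hP
  rw [← tightFace_empty]
  exact convex_tightFace w b ∅

lemma IsFace.trans_of_isPolyhedral {C F G : Set (E n)} (hC : IsPolyhedral C)
    (hF : IsFace C F) (hG : IsFace F G) : IsFace C G := by
  rcases G.eq_empty_or_nonempty with rfl | hGne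
  · exact Or.inl rfl
  obtain ⟨m, w, b, rfl⟩ := hC
  rw [← tightFace_empty] at hF ⊢
  obtain ⟨I, rfl⟩ := exists_tightFace_eq_of_isFace hF (hGne.mono hG.subset)
  obtain ⟨J, rfl⟩ := exists_tightFace_eq_of_isFace hG hGne
  exact isFace_tightFace w b J

lemma IsPolyhedral.finite_setOf_isVertex {P : Set (E n)} (hP : IsPolyhedral P) :
    {v | IsVertex P v}.Finite := by
  obtain ⟨m, w, b, rfl⟩ := hP
  rw [← tightFace_empty]
  choose! J hJ using fun v (hv : IsVertex (tightFace w b ∅) v) =>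
    exists_tightFace_eq_of_isFace hv (singleton_nonempty v)
  refine Set.Finite.of_finite_image (f := J) (toFinite _) fun v hv u hu huv => ?_
  exact singleton_injective ((hJ v hv).trans (huv ▸ (hJ u hu).symm))

lemma IsFace.mono {K A X : Set (E n)} (hX : IsFace K X) (hAK : A ⊆ K) (hXA : X ⊆ A) :
    IsFace A X := by
  simpa only [inter_eq_right.2 hXA] using hX.inter_of_subset hAK

lemma IsFace.isVertex_of_mem {C F : Set (E n)} {v : E n} (hF : IsFace C F) (hv : IsVertex C v)
    (hvF : v ∈ F) : IsVertex F v :=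
  IsFace.mono hv hF.subset (singleton_subset_iff.2 hvF)

lemma setOf_isVertex_of_isFace {C F : Set (E n)} (hC : IsPolyhedral C) (hF : IsFace C F) :
    {v | IsVertex F v} = {v | IsVertex C v} ∩ F := by
  ext v
  exact ⟨fun hv => ⟨hF.trans_of_isPolyhedral hC hv, IsFace.subset hv rfl⟩,
    fun ⟨hv, hvF⟩ => hF.isVertex_of_mem hv hvF⟩

lemma Kpart_subset_s11 {C : Set (E n)} (hC : Convex ℝ C) : Kpart C ⊆ C :=
  convexHull_min (fun _ hv => IsFace.subset hv rfl) hC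

lemma IsFace.trans_Kpart {C F G : Set (E n)} (hC : IsPolyhedral C) (hF : IsFace (Kpart C) F)
    (hG : IsFace F G) : IsFace (Kpart C) G :=
  IsFace.trans_convexHull hC.finite_setOf_isVertex hF hG

lemma Kpart_of_isFace {C F : Set (E n)} (hC : IsPolyhedral C) (hF : IsFace C F) :
    Kpart F = Kpart C ∩ F := by
  refine Subset.antisymm (subset_inter ?_ (Kpart_subset_s11 (hF.convex hC.convex))) ?_
  · exact convexHull_mono (by rw [setOf_isVertex_of_isFace hC hF]; exact inter_subset_left)
  · have hface : IsFace (Kpart C) (Kpart C ∩ F) := hF.inter_of_subset (Kpart_subset_s11 hC.convex)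
    refine (IsFace.eq_convexHull_inter hface).trans_subset (convexHull_mono ?_)
    rw [setOf_isVertex_of_isFace hC hF]
    exact inter_subset_inter_right _ inter_subset_right

lemma IsPolyComplex.isFace_inter_of_isFace_Kpart {cells : Set (Set (E n))}
    (hcx : IsPolyComplex cells) {C D A B : Set (E n)} (hC : C ∈ cells) (hD : D ∈ cells)
    (hA : IsFace (Kpart C) A) (hB : IsFace (Kpart D) B) : IsFace A (A ∩ B) := by
  obtain ⟨-, hpoly, -, hinter⟩ := hcx
  have hCp := (hpoly C hC).1
  have hDp := (hpoly D hD).1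
  obtain ⟨hEC, hED⟩ := hinter C hC D hD
  set L := Kpart (C ∩ D)
  have hLC : L = Kpart C ∩ (C ∩ D) := Kpart_of_isFace hCp hEC
  have hLD : L = Kpart D ∩ (C ∩ D) := Kpart_of_isFace hDp hED
  have hL : IsFace (Kpart C) L := hLC ▸ hEC.inter_of_subset (Kpart_subset_s11 hCp.convex)
  have hLA : IsFace L (L ∩ A) := hA.inter_of_subset (hLC ▸ inter_subset_left)
  have hLB : IsFace L (L ∩ B) := hB.inter_of_subset (hLD ▸ inter_subset_left)
  have hAB : A ∩ B = (L ∩ A) ∩ (L ∩ B) := by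
    refine Subset.antisymm (fun x ⟨hxA, hxB⟩ => ?_) fun x hx => ⟨hx.1.2, hx.2.2⟩
    have hxL : x ∈ L := hLC ▸ ⟨hA.subset hxA, Kpart_subset_s11 hCp.convex (hA.subset hxA),
      Kpart_subset_s11 hDp.convex (hB.subset hxB)⟩
    exact ⟨⟨hxL, hxA⟩, hxL, hxB⟩
  have hABK : IsFace (Kpart C) (A ∩ B) :=
    hAB ▸ (hL.trans_Kpart hCp hLA).trans_Kpart hCp (hLB.inter_of_subset inter_subset_left)
  exact hABK.mono hA.subset inter_subset_left

end

theorem compactPart_is_polytopal_complex_general {n : ℕ} (cells : Set (Set (E n)))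
    (hcx : IsPolyComplex cells) :
    (∀ A ∈ compactPartCells cells, ∀ G, IsFace A G → G.Nonempty →
        G ∈ compactPartCells cells) ∧
    (∀ A ∈ compactPartCells cells, ∀ B ∈ compactPartCells cells,
        IsFace A (A ∩ B) ∧ IsFace B (A ∩ B)) ∧
    (∀ A ∈ compactPartCells cells, Bornology.IsBounded A) := by
  have hpoly C (hC : C ∈ cells) : IsPolyhedral C := (hcx.2.1 C hC).1
  refine ⟨?_, ?_, ?_⟩
  · rintro A ⟨-, C, hC, hA⟩ G hG hGne
    exact ⟨hGne, C, hC, hA.trans_Kpart (hpoly C hC) hG⟩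
  · rintro A ⟨-, C, hC, hA⟩ B ⟨-, D, hD, hB⟩
    exact ⟨hcx.isFace_inter_of_isFace_Kpart hC hD hA hB,
      inter_comm B A ▸ hcx.isFace_inter_of_isFace_Kpart hD hC hB hA⟩
  · rintro A ⟨-, C, hC, hA⟩
    exact (isBounded_convexHull.2 (hpoly C hC).finite_setOf_isVertex.isBounded).subset hA.subset

/-- The compact part of a pointed polyhedral complex is a polytopal complex: it is
closed under taking faces, any two of its polytopes intersect in a common face,
and all its cells are bounded. -/
theorem compactPart_is_polytopal_complex {n : ℕ} (cells : Set (Set (E n)))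
    (hcx : IsPolyComplex cells) (hptd : ∀ C ∈ cells, IsPointed C) :
    (∀ A ∈ compactPartCells cells, ∀ G, IsFace A G → G.Nonempty →
        G ∈ compactPartCells cells) ∧
    (∀ A ∈ compactPartCells cells, ∀ B ∈ compactPartCells cells,
        IsFace A (A ∩ B) ∧ IsFace B (A ∩ B)) ∧
    (∀ A ∈ compactPartCells cells, Bornology.IsBounded A) :=
  compactPart_is_polytopal_complex_general cells hcx
end
end

section
/- Let ReLU neural network functions be given and let F : ℝ² → ℝ^{2n+2} → ℝ be defined by first layer weights (w_j, b_j) = (sin(πj/(n+1)), cos(πj/(n+1)); −1) for j = 1,…,2n+2 and second layer weights (−1, 1, −1, …, 1, −1) with zero bias. Then the origin-containing cell C (the regular (2n+2)-gon where all neurons are inactive) satisfies F(C) = {0}, and for sufficiently small ε > 0 and N(C) a disc of radius r with 1 < r < 1/cos(π/(n+1)) centered at the origin, F⁻¹((−∞,−ε]) ∩ N(C) has exactly n+1 connected components while F⁻¹((−∞,ε]) ∩ N(C) is connected. -/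
/-!
Write `u_j` for the outward unit normal of the `j`-th line and `p_j x = ⟪u_j, x⟫ - 1` for its
preactivation. Normals of equal parity are at least `2π/(n+1)` apart, so
`‖u_i + u_j‖ ≤ 2 cos (π/(n+1))`, while `p_i x, p_j x > 0` forces `⟪u_i + u_j, x⟫ > 2`. Hence on the
disc of radius `r < 1 / cos (π/(n+1))` at most one even and at most one odd neuron is active, and
`F = max 0 (p_k) - max 0 (p_j)` for some odd `k` and even `j` with all other neurons inactive.

Moving `x` towards the origin keeps those other neurons inactive and cannot raise this expression
above `max 0 (F x)`, so `{F ≤ ε}` is star-shaped about `0` within the disc. Within the disc,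
`{F ≤ -ε}` is the disjoint union, over the `n + 1` even `j`, of the closed convex sets
`{x | max 0 (p_k x) + ε ≤ p_j x for every odd k}`, each containing `(1 + ε) u_j` once `ε < r - 1`.
-/

open scoped RealInnerProductSpace
open Set Real

noncomputable section

abbrev E2 := EuclideanSpace ℝ (Fin 2)

/-- First-layer preactivation of the j-th neuron: the tangent line to the unit
circle at angle π(j+1)/(n+1), co-oriented outward, with bias −1. -/
def preact (n : ℕ) (j : Fin (2 * n + 2)) (x : E2) : ℝ :=
  Real.sin (Real.pi * ((j : ℕ) + 1) / (n + 1)) * x 0 +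
    Real.cos (Real.pi * ((j : ℕ) + 1) / (n + 1)) * x 1 - 1

/-- The depth-2 ReLU network with alternating second-layer weights (−1,1,…,1,−1). -/
def netF (n : ℕ) (x : E2) : ℝ :=
  ∑ j : Fin (2 * n + 2), (-1 : ℝ) ^ ((j : ℕ) + 1) * max 0 (preact n j x)

/-- The central flat cell: the regular (2n+2)-gon on which every neuron is inactive. -/
def centralCell (n : ℕ) : Set E2 := {x | ∀ j : Fin (2 * n + 2), preact n j x ≤ 0}

open Metric

lemma max_zero_mul_add_one_sub_one_le {p t : ℝ} (ht₀ : 0 ≤ t) (ht₁ : t ≤ 1) :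
    max 0 (t * (p + 1) - 1) ≤ max 0 p := by
  refine max_le (le_max_left _ _) ?_
  rcases le_total 0 (p + 1) with h | h
  · nlinarith [le_max_right 0 p]
  · nlinarith [le_max_left 0 p]

lemma max_zero_mul_add_one_sub_one_sub_le {p q t : ℝ} (ht₀ : 0 ≤ t) (ht₁ : t ≤ 1) :
    max 0 (t * (p + 1) - 1) - max 0 (t * (q + 1) - 1) ≤ max 0 (max 0 p - max 0 q) := by
  rcases le_total q 0 with hq | hq
  · have hq' : t * (q + 1) - 1 ≤ 0 := by nlinarith
    rw [max_eq_left hq, max_eq_left hq', sub_zero, sub_zero, max_eq_right (le_max_left 0 p)]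
    exact max_zero_mul_add_one_sub_one_le ht₀ ht₁
  · rw [max_eq_right hq]
    rcases le_total (t * (p + 1)) 1 with hp | hp
    · rw [max_eq_left (by linarith : t * (p + 1) - 1 ≤ 0)]
      linarith [le_max_left 0 (t * (q + 1) - 1), le_max_left 0 (max 0 p - q)]
    · rw [max_eq_right (by linarith : 0 ≤ t * (p + 1) - 1)]
      have hq' := le_max_right 0 (t * (q + 1) - 1)
      rcases le_total p q with hpq | hpq
      · nlinarith [le_max_left 0 (max 0 p - q)]
      · nlinarith [le_max_right 0 p, le_max_right 0 (max 0 p - q)]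

lemma cos_pi_mul_div_le {N d k : ℝ} (hN : 0 < N) (hk : 0 ≤ k) (hkd : k ≤ d)
    (hd : d + k ≤ 2 * N) : cos (π * d / N) ≤ cos (π * k / N) := by
  have hmono : ∀ e, k ≤ e → e ≤ N → cos (π * e / N) ≤ cos (π * k / N) := fun e hke heN =>
    cos_le_cos_of_nonneg_of_le_pi (by positivity)
      (by rw [div_le_iff₀ hN]; nlinarith [pi_pos]) (by gcongr)
  rcases le_total d N with h | h
  · exact hmono d hkd h
  · rw [show π * d / N = 2 * π - π * (2 * N - d) / N by field_simp; ring, cos_two_pi_sub]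
    exact hmono _ (by linarith) (by linarith)

lemma isClopen_of_isClosed_of_pairwiseDisjoint_cover {X ι : Type*} [TopologicalSpace X]
    [Finite ι] {U : ι → Set X} (hclosed : ∀ i, IsClosed (U i))
    (hdisj : Pairwise (Function.onFun Disjoint U)) (hcover : ⋃ i, U i = univ) (i : ι) :
    IsClopen (U i) := by
  refine ⟨hclosed i, isClosed_compl_iff.mp ?_⟩
  have hcompl : (U i)ᶜ = ⋃ j ∈ ({i}ᶜ : Set ι), U j := by
    ext x
    simp only [mem_compl_iff, mem_iUnion, mem_singleton_iff, exists_prop]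
    constructor
    · intro hx
      obtain ⟨j, hj⟩ := mem_iUnion.mp (hcover ▸ mem_univ x)
      exact ⟨j, fun hji => hx (hji ▸ hj), hj⟩
    · rintro ⟨j, hji, hj⟩ hi
      exact (hdisj hji).ne_of_mem hj hi rfl
  rw [hcompl]
  exact (toFinite _).isClosed_biUnion fun j _ => hclosed j

theorem card_connectedComponents_of_pairwiseDisjoint_cover {X ι : Type*} [TopologicalSpace X]
    [Finite ι] {S : Set X} {U : ι → Set X} (hS : S = ⋃ i, U i) (hclosed : ∀ i, IsClosed (U i))
    (hconn : ∀ i, IsConnected (U i)) (hdisj : Pairwise (Function.onFun Disjoint U)) :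
    Nat.card (ConnectedComponents S) = Nat.card ι := by
  have hsub : ∀ i, U i ⊆ S := fun i => hS ▸ subset_iUnion U i
  have himage : ∀ i, ((↑) : S → X) '' ((↑) ⁻¹' U i) = U i := fun i => by
    rw [Subtype.image_preimage_coe, inter_eq_right.mpr (hsub i)]
  have hcover : ⋃ i, ((↑) : S → X) ⁻¹' U i = univ := by
    rw [← preimage_iUnion, ← hS, Subtype.coe_preimage_self]
  refine Nat.card_congr (ConnectedComponents.equivOfIsClopenOfIsConnected
    (isClopen_of_isClosed_of_pairwiseDisjoint_cover
      (fun i => (hclosed i).preimage continuous_subtype_val)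
      (fun i j hij => (hdisj hij).preimage _) hcover)
    (fun i j hij => (hdisj hij).preimage _) hcover fun i => ⟨?_, ?_⟩)
  · obtain ⟨x, hx⟩ := (hconn i).nonempty
    exact ⟨⟨x, hsub i hx⟩, hx⟩
  · rw [← Topology.IsInducing.subtypeVal.isPreconnected_image, himage]
    exact (hconn i).isPreconnected

def neuronAngle (n : ℕ) (j : Fin (2 * n + 2)) : ℝ := π * ((j : ℕ) + 1) / (n + 1)

lemma preact_eq (n : ℕ) (j : Fin (2 * n + 2)) (x : E2) :
    preact n j x = sin (neuronAngle n j) * x 0 + cos (neuronAngle n j) * x 1 - 1 := rfl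

lemma cos_neuronAngle_sub_le {n k : ℕ} {i j : Fin (2 * n + 2)} (hk : k ≤ Nat.dist i j)
    (hd : Nat.dist i j + k ≤ 2 * n + 2) :
    cos (neuronAngle n i - neuronAngle n j) ≤ cos (π * k / (n + 1)) := by
  wlog hji : (j : ℕ) ≤ i generalizing i j
  · rw [← cos_neg, neg_sub]
    rw [Nat.dist_comm] at hk hd
    exact this hk hd (by omega)
  have hangle : neuronAngle n i - neuronAngle n j = π * (Nat.dist i j : ℕ) / (n + 1) := by
    rw [Nat.dist_eq_sub_of_le_right hji, Nat.cast_sub hji, neuronAngle, neuronAngle]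
    ring
  rw [hangle]
  exact cos_pi_mul_div_le (by positivity) (Nat.cast_nonneg k) (by exact_mod_cast hk)
    (by exact_mod_cast hd)

lemma preact_smul (n : ℕ) (j : Fin (2 * n + 2)) (t : ℝ) (x : E2) :
    preact n j (t • x) = t * (preact n j x + 1) - 1 := by
  simp only [preact, PiLp.smul_apply, smul_eq_mul]
  ring

lemma preact_nonpos_smul {n : ℕ} {j : Fin (2 * n + 2)} {t : ℝ} {x : E2} (ht₀ : 0 ≤ t)
    (ht₁ : t ≤ 1) (h : preact n j x ≤ 0) : preact n j (t • x) ≤ 0 := by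
  rw [preact_smul]
  nlinarith

lemma preact_add_smul (n : ℕ) (j : Fin (2 * n + 2)) {a b : ℝ} (hab : a + b = 1) (x y : E2) :
    preact n j (a • x + b • y) = a * preact n j x + b * preact n j y := by
  simp only [preact, PiLp.add_apply, PiLp.smul_apply, smul_eq_mul]
  linear_combination hab

@[fun_prop]
lemma continuous_preact (n : ℕ) (j : Fin (2 * n + 2)) : Continuous (preact n j) := by
  unfold preact
  fun_prop

lemma netF_eq_zero_of_mem_centralCell {n : ℕ} {x : E2} (hx : x ∈ centralCell n) :
    netF n x = 0 :=
  Finset.sum_eq_zero fun j _ => by rw [max_eq_left (hx j), mul_zero]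

lemma zero_mem_centralCell (n : ℕ) : (0 : E2) ∈ centralCell n := fun j => by
  simp [preact]

lemma netF_eq_of_inactive {n : ℕ} {x : E2} {j k : Fin (2 * n + 2)} (hj : Even (j : ℕ))
    (hk : Odd (k : ℕ)) (hrest : ∀ i, i ≠ j → i ≠ k → preact n i x ≤ 0) :
    netF n x = max 0 (preact n k x) - max 0 (preact n j x) := by
  have hjk : j ≠ k := fun h => Nat.not_even_iff_odd.mpr hk (h ▸ hj)
  rw [netF, ← Finset.sum_subset (Finset.subset_univ {j, k}), Finset.sum_pair hjk,
    hj.add_one.neg_one_pow, hk.add_one.neg_one_pow]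
  · ring
  · intro i _ hi
    simp only [Finset.mem_insert, Finset.mem_singleton, not_or] at hi
    rw [max_eq_left (hrest i hi.1 hi.2), mul_zero]

lemma sq_add_sq_le_of_mem_closedBall {r : ℝ} {x : E2} (hx : x ∈ closedBall (0 : E2) r) :
    x 0 ^ 2 + x 1 ^ 2 ≤ r ^ 2 := by
  rw [mem_closedBall_zero_iff, EuclideanSpace.norm_eq, sqrt_le_iff] at hx
  simpa [Fin.sum_univ_two] using hx.2

lemma preact_nonpos_of_same_parity {n : ℕ} {r : ℝ} (hc : 0 < cos (π / (n + 1)))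
    (hrc : r * cos (π / (n + 1)) < 1) {x : E2} (hx : x ∈ closedBall (0 : E2) r)
    {i j : Fin (2 * n + 2)} (hij : i ≠ j) (hpar : (i : ℕ) % 2 = (j : ℕ) % 2)
    (hi : 0 < preact n i x) : preact n j x ≤ 0 := by
  by_contra! hj
  set c := cos (π / (n + 1))
  have hx2 := sq_add_sq_le_of_mem_closedBall hx
  have hr : 0 ≤ r := nonneg_of_mem_closedBall hx
  have hgap : cos (neuronAngle n i - neuronAngle n j) ≤ 2 * c ^ 2 - 1 := by
    have hne : (i : ℕ) ≠ j := Fin.val_ne_of_ne hij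
    have := cos_neuronAngle_sub_le (n := n) (k := 2) (i := i) (j := j)
      (by simp only [Nat.dist]; omega) (by simp only [Nat.dist]; omega)
    rwa [show π * ((2 : ℕ) : ℝ) / (n + 1) = 2 * (π / (n + 1)) by push_cast; ring,
      cos_two_mul] at this
  rw [preact_eq] at hi hj
  set A := sin (neuronAngle n i) + sin (neuronAngle n j)
  set B := cos (neuronAngle n i) + cos (neuronAngle n j)
  have hsum : 2 < A * x 0 + B * x 1 := by linarith
  have hAB : A ^ 2 + B ^ 2 ≤ 4 * c ^ 2 := by
    have := cos_sub (neuronAngle n i) (neuronAngle n j)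
    nlinarith [sin_sq_add_cos_sq (neuronAngle n i), sin_sq_add_cos_sq (neuronAngle n j)]
  have hCS : (A * x 0 + B * x 1) ^ 2 ≤ (A ^ 2 + B ^ 2) * (x 0 ^ 2 + x 1 ^ 2) := by
    nlinarith [sq_nonneg (A * x 1 - B * x 0)]
  have hrc2 : (r * c) ^ 2 < 1 := by nlinarith [mul_nonneg hr hc.le]
  nlinarith [mul_le_mul hAB hx2 (by positivity) (by positivity)]

lemma exists_inactive_off_one_of_parity {n : ℕ} {r : ℝ} (hc : 0 < cos (π / (n + 1)))
    (hrc : r * cos (π / (n + 1)) < 1) {x : E2} (hx : x ∈ closedBall (0 : E2) r) {q : ℕ}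
    (hq : q < 2) : ∃ j : Fin (2 * n + 2), (j : ℕ) % 2 = q ∧
      ∀ i : Fin (2 * n + 2), (i : ℕ) % 2 = q → i ≠ j → preact n i x ≤ 0 := by
  by_cases hact : ∃ j : Fin (2 * n + 2), (j : ℕ) % 2 = q ∧ 0 < preact n j x
  · obtain ⟨j, hjq, hj⟩ := hact
    exact ⟨j, hjq, fun i hiq hij =>
      preact_nonpos_of_same_parity hc hrc hx hij.symm (by rw [hjq, hiq]) hj⟩
  · push Not at hact
    exact ⟨⟨q, by omega⟩, Nat.mod_eq_of_lt hq, fun i hiq _ => hact i hiq⟩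

lemma exists_inactive_off_pair {n : ℕ} {r : ℝ} (hc : 0 < cos (π / (n + 1)))
    (hrc : r * cos (π / (n + 1)) < 1) {x : E2} (hx : x ∈ closedBall (0 : E2) r) :
    ∃ j k : Fin (2 * n + 2), Even (j : ℕ) ∧ Odd (k : ℕ) ∧
      ∀ i, i ≠ j → i ≠ k → preact n i x ≤ 0 := by
  obtain ⟨j, hj, hjdom⟩ := exists_inactive_off_one_of_parity hc hrc hx (q := 0) (by norm_num)
  obtain ⟨k, hk, hkdom⟩ := exists_inactive_off_one_of_parity hc hrc hx (q := 1) (by norm_num)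
  refine ⟨j, k, Nat.even_iff.mpr hj, Nat.odd_iff.mpr hk, fun i hij hik => ?_⟩
  rcases Nat.mod_two_eq_zero_or_one i with hi | hi
  exacts [hjdom i hi hij, hkdom i hi hik]

lemma netF_smul_le {n : ℕ} {r : ℝ} (hc : 0 < cos (π / (n + 1)))
    (hrc : r * cos (π / (n + 1)) < 1) {x : E2} (hx : x ∈ closedBall (0 : E2) r) {t : ℝ}
    (ht₀ : 0 ≤ t) (ht₁ : t ≤ 1) : netF n (t • x) ≤ max 0 (netF n x) := by
  obtain ⟨j, k, hj, hk, hrest⟩ := exists_inactive_off_pair hc hrc hx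
  rw [netF_eq_of_inactive hj hk hrest,
    netF_eq_of_inactive hj hk fun i hij hik => preact_nonpos_smul ht₀ ht₁ (hrest i hij hik),
    preact_smul, preact_smul]
  exact max_zero_mul_add_one_sub_one_sub_le ht₀ ht₁

lemma starConvex_sublevel_inter_closedBall {n : ℕ} {r ε : ℝ} (hc : 0 < cos (π / (n + 1)))
    (hrc : r * cos (π / (n + 1)) < 1) (hε : 0 ≤ ε) :
    StarConvex ℝ 0 (netF n ⁻¹' Iic ε ∩ closedBall (0 : E2) r) := by
  refine starConvex_zero_iff.mpr fun x ⟨hxε, hx⟩ t ht₀ ht₁ => ⟨?_, ?_⟩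
  · exact (netF_smul_le hc hrc hx ht₀ ht₁).trans (max_le hε hxε)
  · rw [mem_closedBall_zero_iff, norm_smul, Real.norm_of_nonneg ht₀]
    exact (mul_le_of_le_one_left (norm_nonneg x) ht₁).trans (mem_closedBall_zero_iff.mp hx)

def cap (n : ℕ) (r ε : ℝ) (j : Fin (2 * n + 2)) : Set E2 :=
  closedBall 0 r ∩
    ⋂ (k : Fin (2 * n + 2)) (_ : Odd (k : ℕ)), {x | max 0 (preact n k x) + ε ≤ preact n j x}

lemma mem_cap {n : ℕ} {r ε : ℝ} {j : Fin (2 * n + 2)} {x : E2} :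
    x ∈ cap n r ε j ↔
      x ∈ closedBall (0 : E2) r ∧
        ∀ k : Fin (2 * n + 2), Odd (k : ℕ) → max 0 (preact n k x) + ε ≤ preact n j x := by
  simp only [cap, mem_inter_iff, mem_iInter, mem_ofPred_eq]

lemma convex_cap (n : ℕ) (r ε : ℝ) (j : Fin (2 * n + 2)) : Convex ℝ (cap n r ε j) := by
  refine (convex_closedBall _ _).inter (convex_iInter₂ fun k _ => ?_)
  intro x hx y hy a b ha hb hab
  simp only [mem_ofPred_eq, preact_add_smul n _ hab] at hx hy ⊢
  have hrelu : max 0 (a * preact n k x + b * preact n k y) ≤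
      a * max 0 (preact n k x) + b * max 0 (preact n k y) := by
    have := mul_le_mul_of_nonneg_left (le_max_right 0 (preact n k x)) ha
    have := mul_le_mul_of_nonneg_left (le_max_right 0 (preact n k y)) hb
    exact max_le (by positivity) (by linarith)
  have hε : a * ε + b * ε = ε := by linear_combination ε * hab
  linarith [mul_le_mul_of_nonneg_left hx ha, mul_le_mul_of_nonneg_left hy hb]

lemma isClosed_cap (n : ℕ) (r ε : ℝ) (j : Fin (2 * n + 2)) : IsClosed (cap n r ε j) :=
  isClosed_closedBall.inter (isClosed_biInter fun _ _ => isClosed_le (by fun_prop) (by fun_prop))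

lemma preact_pos_of_mem_cap {n : ℕ} {r ε : ℝ} (hε : 0 < ε) {j : Fin (2 * n + 2)} {x : E2}
    (hx : x ∈ cap n r ε j) : 0 < preact n j x := by
  have := (mem_cap.mp hx).2 ⟨1, by omega⟩ odd_one
  linarith [le_max_left 0 (preact n ⟨1, by omega⟩ x)]

lemma disjoint_cap {n : ℕ} {r ε : ℝ} (hc : 0 < cos (π / (n + 1)))
    (hrc : r * cos (π / (n + 1)) < 1) (hε : 0 < ε) {i j : Fin (2 * n + 2)} (hij : i ≠ j)
    (hpar : (i : ℕ) % 2 = (j : ℕ) % 2) : Disjoint (cap n r ε i) (cap n r ε j) :=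
  disjoint_left.mpr fun _ hi hj => (preact_pos_of_mem_cap hε hj).not_ge <|
    preact_nonpos_of_same_parity hc hrc (mem_cap.mp hi).1 hij hpar (preact_pos_of_mem_cap hε hi)

lemma cap_subset_sublevel {n : ℕ} {r ε : ℝ} (hc : 0 < cos (π / (n + 1)))
    (hrc : r * cos (π / (n + 1)) < 1) (hε : 0 < ε) {j : Fin (2 * n + 2)} (hj : Even (j : ℕ)) :
    cap n r ε j ⊆ netF n ⁻¹' Iic (-ε) ∩ closedBall (0 : E2) r := by
  intro x hx
  obtain ⟨hxr, hxcap⟩ := mem_cap.mp hx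
  have hjpos := preact_pos_of_mem_cap hε hx
  obtain ⟨j', k, -, hk, hrest⟩ := exists_inactive_off_pair hc hrc hxr
  obtain rfl : j = j' := by
    by_contra hne
    have hjk : j ≠ k := fun h => Nat.not_even_iff_odd.mpr hk (h ▸ hj)
    exact (hrest j hne hjk).not_gt hjpos
  refine ⟨?_, hxr⟩
  rw [mem_preimage, mem_Iic, netF_eq_of_inactive hj hk hrest, max_eq_right hjpos.le]
  linarith [hxcap k hk]

lemma exists_mem_cap_of_mem_sublevel {n : ℕ} {r ε : ℝ} (hc : 0 < cos (π / (n + 1)))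
    (hrc : r * cos (π / (n + 1)) < 1) (hε : 0 < ε) {x : E2}
    (hx : x ∈ netF n ⁻¹' Iic (-ε) ∩ closedBall (0 : E2) r) :
    ∃ j : Fin (2 * n + 2), Even (j : ℕ) ∧ x ∈ cap n r ε j := by
  obtain ⟨hxε, hxr⟩ := hx
  obtain ⟨j, k, hj, hk, hrest⟩ := exists_inactive_off_pair hc hrc hxr
  rw [mem_preimage, mem_Iic, netF_eq_of_inactive hj hk hrest] at hxε
  have hk0 := le_max_left 0 (preact n k x)
  have hjpos : 0 < preact n j x := by
    by_contra! h
    rw [max_eq_left h] at hxε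
    linarith
  rw [max_eq_right hjpos.le] at hxε
  refine ⟨j, hj, mem_cap.mpr ⟨hxr, fun k' hk' => ?_⟩⟩
  by_cases hkk : k' = k
  · rw [hkk]
    linarith
  · have hjk : k' ≠ j := fun h => Nat.not_even_iff_odd.mpr hk' (h ▸ hj)
    rw [max_eq_left (hrest k' hjk hkk)]
    linarith

def evenNeuron (n : ℕ) (m : Fin (n + 1)) : Fin (2 * n + 2) := ⟨2 * m, by omega⟩

lemma evenNeuron_injective (n : ℕ) : Function.Injective (evenNeuron n) := fun m m' h => by
  simp only [evenNeuron, Fin.ext_iff] at h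
  exact Fin.ext (by omega)

lemma sublevel_eq_iUnion_cap {n : ℕ} {r ε : ℝ} (hc : 0 < cos (π / (n + 1)))
    (hrc : r * cos (π / (n + 1)) < 1) (hε : 0 < ε) :
    netF n ⁻¹' Iic (-ε) ∩ closedBall (0 : E2) r = ⋃ m, cap n r ε (evenNeuron n m) := by
  refine subset_antisymm (fun x hx => ?_)
    (iUnion_subset fun m => cap_subset_sublevel hc hrc hε (even_two_mul _))
  obtain ⟨j, hj, hxj⟩ := exists_mem_cap_of_mem_sublevel hc hrc hε hx
  obtain ⟨m, hm⟩ := hj.two_dvd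
  have hjm : evenNeuron n ⟨m, by omega⟩ = j := Fin.ext hm.symm
  exact mem_iUnion.mpr ⟨_, hjm ▸ hxj⟩

def radialPoint (n : ℕ) (ρ : ℝ) (j : Fin (2 * n + 2)) : E2 :=
  !₂[ρ * sin (neuronAngle n j), ρ * cos (neuronAngle n j)]

lemma preact_radialPoint (n : ℕ) (ρ : ℝ) (i j : Fin (2 * n + 2)) :
    preact n i (radialPoint n ρ j) = ρ * cos (neuronAngle n i - neuronAngle n j) - 1 := by
  simp only [preact_eq, radialPoint, cos_sub, Fin.isValue, Matrix.cons_val_zero,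
    Matrix.cons_val_one, Matrix.cons_val_fin_one]
  ring

lemma radialPoint_mem_cap {n : ℕ} {r ε : ℝ} (hε : 0 ≤ ε) (hr : 1 + ε ≤ r)
    (hεc : (1 + ε) * cos (π / (n + 1)) < 1) {j : Fin (2 * n + 2)} (hj : Even (j : ℕ)) :
    radialPoint n (1 + ε) j ∈ cap n r ε j := by
  refine mem_cap.mpr ⟨?_, fun k hk => ?_⟩
  · rw [mem_closedBall_zero_iff, EuclideanSpace.norm_eq, sqrt_le_iff]
    refine ⟨by linarith, ?_⟩
    simp only [radialPoint, norm_eq_abs, sq_abs, Fin.sum_univ_two, Fin.isValue,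
      Matrix.cons_val_zero, Matrix.cons_val_one, Matrix.cons_val_fin_one, mul_pow]
    nlinarith [sin_sq_add_cos_sq (neuronAngle n j)]
  · have hkj : (k : ℕ) ≠ j := fun h => Nat.not_even_iff_odd.mpr hk (h ▸ hj)
    have hgap := cos_neuronAngle_sub_le (n := n) (k := 1) (i := k) (j := j)
      (by simp only [Nat.dist]; omega) (by simp only [Nat.dist]; omega)
    rw [Nat.cast_one, mul_one] at hgap
    rw [preact_radialPoint, preact_radialPoint, sub_self, cos_zero, max_eq_left]
    · linarith
    · nlinarith [mul_le_mul_of_nonneg_left hgap (by linarith : (0 : ℝ) ≤ 1 + ε)]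

/-- The network vanishes identically on the central cell, and for a disc N(C) of
radius 1 < r < 1/cos(π/(n+1)) about the origin and all sufficiently small ε > 0,
the sublevel set F_{≤−ε} ∩ N(C) has exactly n+1 connected components while
F_{≤ε} ∩ N(C) is connected. -/
theorem local_complexity_example (n : ℕ) :
    (∀ x ∈ centralCell n, netF n x = 0) ∧
    ∀ r : ℝ, 1 < r → r < 1 / Real.cos (Real.pi / (n + 1)) →
      ∃ ε₀ > (0 : ℝ), ∀ ε : ℝ, 0 < ε → ε < ε₀ →
        Nat.card (ConnectedComponents
            ↥(netF n ⁻¹' Set.Iic (-ε) ∩ Metric.closedBall (0 : E2) r)) = n + 1 ∧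
        IsConnected (netF n ⁻¹' Set.Iic ε ∩ Metric.closedBall (0 : E2) r) := by
  refine ⟨fun x hx => netF_eq_zero_of_mem_centralCell hx, fun r hr₁ hr => ?_⟩
  have hc : 0 < cos (π / (n + 1)) := by
    by_contra! h
    linarith [one_div_nonpos.mpr h]
  have hrc : r * cos (π / (n + 1)) < 1 := (lt_div_iff₀ hc).mp hr
  refine ⟨r - 1, by linarith, fun ε hε hεr => ⟨?_, ?_⟩⟩
  · have hεc : (1 + ε) * cos (π / (n + 1)) < 1 := by nlinarith
    rw [card_connectedComponents_of_pairwiseDisjoint_cover (sublevel_eq_iUnion_cap hc hrc hε)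
      (fun _ => isClosed_cap n r ε _)
      (fun _ => (convex_cap n r ε _).isConnected
        ⟨_, radialPoint_mem_cap hε.le (by linarith) hεc (even_two_mul _)⟩)
      (fun _ _ hm =>
        disjoint_cap hc hrc hε ((evenNeuron_injective n).ne hm) (by simp [evenNeuron])),
      Nat.card_eq_fintype_card, Fintype.card_fin]
  · have h0 : (0 : E2) ∈ netF n ⁻¹' Iic ε ∩ closedBall 0 r :=
      ⟨by simp [netF_eq_zero_of_mem_centralCell (zero_mem_centralCell n), hε.le],
        mem_closedBall_self (by linarith)⟩
    exact ((starConvex_sublevel_inter_closedBall hc hrc hε.le).isPathConnected h0).isConnected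
end
end
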